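/- arXiv:0907.2881 — 3 statements merged into one kernel-verified Lean document; each statement's English description precedes it below -/
import Mathlib

section
/- Let k be a field and f : H → K a morphism in the category of Hopf algebras over k. Then f is an epimorphism in the category of Hopf algebras over k if and only if the underlying k-algebra homomorphism of f is an epimorphism in the category of k-algebras. -/
open TensorProduct

suppress_compilation
set_option synthInstance.maxHeartbeats 800000
set_option maxHeartbeats 1600000

universe u

namespace HopfEpiAux

variable {k : Type u} [CommRing k]


section Conv

variable {C A : Type*} [AddCommGroup C] [Module k C] [Coalgebra k C]
  [Ring A] [Algebra k A]

/-- Convolution product of linear maps out of a coalgebra into an algebra. -/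
def conv (φ ψ : C →ₗ[k] A) : C →ₗ[k] A :=
  LinearMap.mul' k A ∘ₗ TensorProduct.map φ ψ ∘ₗ Coalgebra.comul

/-- The unit for convolution. -/
def convUnit : C →ₗ[k] A := Algebra.linearMap k A ∘ₗ Coalgebra.counit

lemma conv_apply_repr {ι : Type*} (φ ψ : C →ₗ[k] A) {a : C} (r : Coalgebra.Repr k a ι) :
    conv φ ψ a = ∑ i ∈ r.index, φ (r.left i) * ψ (r.right i) := by
  simp [conv, ← r.eq, map_sum]

lemma convUnit_apply (a : C) : (convUnit (k := k) (A := A)) a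
    = algebraMap k A (Coalgebra.counit a) := rfl

lemma conv_unit_left (φ : C →ₗ[k] A) : conv convUnit φ = φ := by
  ext a
  obtain r := Coalgebra.Repr.arbitrary k a
  rw [conv_apply_repr _ _ r]
  have h := Coalgebra.sum_counit_tmul_map_eq (R := k) φ a (repr := r)
  have h2 := congrArg (TensorProduct.lid k A) h
  simp only [map_sum, lid_tmul, one_smul] at h2
  calc ∑ i ∈ r.index, convUnit (k := k) (A := A) (r.left i) * φ (r.right i)
      = ∑ i ∈ r.index, Coalgebra.counit (R := k) (r.left i) • φ (r.right i) := by
        refine Finset.sum_congr rfl fun i _ => ?_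
        rw [convUnit_apply, Algebra.smul_def]
    _ = φ a := h2

lemma conv_unit_right (φ : C →ₗ[k] A) : conv φ convUnit = φ := by
  ext a
  obtain r := Coalgebra.Repr.arbitrary k a
  rw [conv_apply_repr _ _ r]
  have h := Coalgebra.sum_map_tmul_counit_eq (R := k) φ a (repr := r)
  have h2 := congrArg (TensorProduct.rid k A) h
  simp only [map_sum, rid_tmul, one_smul] at h2
  calc ∑ i ∈ r.index, φ (r.left i) * convUnit (k := k) (A := A) (r.right i)
      = ∑ i ∈ r.index, Coalgebra.counit (R := k) (r.right i) • φ (r.left i) := by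
        refine Finset.sum_congr rfl fun i _ => ?_
        rw [convUnit_apply, ← Algebra.commutes, ← Algebra.smul_def]
    _ = φ a := h2

lemma conv_assoc (φ ψ χ : C →ₗ[k] A) : conv (conv φ ψ) χ = conv φ (conv ψ χ) := by
  ext a
  obtain r := Coalgebra.Repr.arbitrary k a
  have key := Coalgebra.sum_map_tmul_tmul_eq (R := k) φ ψ χ a (repr := r)
    (a₁ := fun i => Coalgebra.Repr.arbitrary k (r.left i))
    (a₂ := fun i => Coalgebra.Repr.arbitrary k (r.right i))
  have key2 := congrArg (LinearMap.mul' k A ∘ₗ LinearMap.lTensor A (LinearMap.mul' k A)) key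
  simp only [map_sum, LinearMap.comp_apply, LinearMap.lTensor_tmul,
    LinearMap.mul'_apply] at key2
  rw [conv_apply_repr (conv φ ψ) χ r, conv_apply_repr φ (conv ψ χ) r]
  calc ∑ i ∈ r.index, conv φ ψ (r.left i) * χ (r.right i)
      = ∑ i ∈ r.index, ∑ j ∈ (Coalgebra.Repr.arbitrary k (r.left i)).index,
          φ ((Coalgebra.Repr.arbitrary k (r.left i)).left j) *
          (ψ ((Coalgebra.Repr.arbitrary k (r.left i)).right j) * χ (r.right i)) := by
        refine Finset.sum_congr rfl fun i _ => ?_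
        rw [conv_apply_repr φ ψ (Coalgebra.Repr.arbitrary k (r.left i)), Finset.sum_mul]
        exact Finset.sum_congr rfl fun j _ => by rw [mul_assoc]
    _ = ∑ i ∈ r.index, ∑ j ∈ (Coalgebra.Repr.arbitrary k (r.right i)).index,
          φ (r.left i) * (ψ ((Coalgebra.Repr.arbitrary k (r.right i)).left j) *
          χ ((Coalgebra.Repr.arbitrary k (r.right i)).right j)) := key2.symm
    _ = ∑ i ∈ r.index, φ (r.left i) * conv ψ χ (r.right i) := by
        refine Finset.sum_congr rfl fun i _ => ?_
        rw [conv_apply_repr ψ χ (Coalgebra.Repr.arbitrary k (r.right i)), Finset.mul_sum]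

lemma conv_cancel {φ ψ χ : C →ₗ[k] A} (h1 : conv χ φ = convUnit)
    (h2 : conv φ ψ = convUnit) : χ = ψ := by
  have : conv χ (conv φ ψ) = conv (conv χ φ) ψ := (conv_assoc χ φ ψ).symm
  rw [h1, h2, conv_unit_right, conv_unit_left] at this
  exact this

end Conv

section Antipode

open HopfAlgebra Coalgebra

variable {B B' : Type*} [Ring B] [HopfAlgebra k B] [Ring B'] [HopfAlgebra k B']

lemma conv_antipode_id :
    conv (antipode (R := k) (A := B)) LinearMap.id = convUnit := by
  ext a
  rw [conv_apply_repr _ _ (Coalgebra.Repr.arbitrary k a), convUnit_apply]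
  simp only [LinearMap.id_coe, id_eq]
  exact sum_antipode_mul_eq_algebraMap_counit _

lemma conv_id_antipode :
    conv LinearMap.id (antipode (R := k) (A := B)) = convUnit := by
  ext a
  rw [conv_apply_repr _ _ (Coalgebra.Repr.arbitrary k a), convUnit_apply]
  simp only [LinearMap.id_coe, id_eq]
  exact sum_mul_antipode_eq_algebraMap_counit _

/-- A bialgebra morphism between Hopf algebras commutes with the antipodes. -/
lemma antipode_map (f : B →ₐc[k] B') (a : B) :
    antipode (R := k) (f a) = f (antipode (R := k) a) := by
  have h1 : conv (f.toLinearMap ∘ₗ antipode (R := k)) f.toLinearMap = convUnit := by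
    ext a
    obtain r := Coalgebra.Repr.arbitrary k a
    rw [conv_apply_repr _ _ r, convUnit_apply]
    calc ∑ i ∈ r.index, (f.toLinearMap ∘ₗ antipode (R := k)) (r.left i) *
          f.toLinearMap (r.right i)
        = f (∑ i ∈ r.index, antipode (R := k) (r.left i) * r.right i) := by
          rw [map_sum]; exact Finset.sum_congr rfl fun i _ => (map_mul f _ _).symm
      _ = algebraMap k B' (counit (R := k) a) := by
          rw [sum_antipode_mul_eq_algebraMap_counit r, AlgHomClass.commutes]
  have h2 : conv (f.toLinearMap) (antipode (R := k) ∘ₗ f.toLinearMap) = convUnit := by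
    ext a
    obtain r := Coalgebra.Repr.arbitrary k a
    have hr : ∑ i ∈ r.index, (f (r.left i)) ⊗ₜ[k] (f (r.right i)) =
        CoalgebraStruct.comul (R := k) (f a) := by
      have := congr($(CoalgHomClass.map_comp_comul f) a)
      simp only [LinearMap.comp_apply, LinearMap.coe_coe] at this
      rw [← this, ← r.eq, map_sum]
      simp
    have key := sum_mul_antipode_eq_algebraMap_counit (R := k)
      (⟨r.index, fun i => f (r.left i), fun i => f (r.right i), hr⟩ : Coalgebra.Repr k (f a) (B × B))
    rw [conv_apply_repr _ _ r, convUnit_apply]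
    have hc := congr($(CoalgHomClass.counit_comp f) a)
    simp only [LinearMap.comp_apply, LinearMap.coe_coe] at hc
    calc ∑ i ∈ r.index, f.toLinearMap (r.left i) *
          (antipode (R := k) ∘ₗ f.toLinearMap) (r.right i)
        = ∑ i ∈ r.index, f (r.left i) * antipode (R := k) (f (r.right i)) := rfl
      _ = algebraMap k B' (counit (R := k) (f a)) := key
      _ = algebraMap k B' (counit (R := k) a) := by rw [hc]
  have := conv_cancel h1 h2
  exact congr($(this) a).symm

@[simp]
lemma antipode_one' : antipode (R := k) (1 : B) = 1 := by
  have := mul_antipode_rTensor_comul_apply (R := k) (1 : B)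
  simpa [Bialgebra.comul_one, Algebra.TensorProduct.one_def] using this

lemma antipode_algebraMap' (c : k) :
    antipode (R := k) (algebraMap k B c) = algebraMap k B c := by
  rw [Algebra.algebraMap_eq_smul_one, map_smul, antipode_one']

end Antipode


section AntipodeMul

open HopfAlgebra Coalgebra

variable {B : Type u} [Ring B] [HopfAlgebra k B]

/-- Representation of the comultiplication of a pure tensor in the tensor-product coalgebra. -/
def tmulRepr (a b : B) : Coalgebra.Repr k (a ⊗ₜ[k] b) ((B × B) × (B × B)) where
  index := (Coalgebra.Repr.arbitrary k a).index ×ˢ (Coalgebra.Repr.arbitrary k b).index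
  left := fun p => (Coalgebra.Repr.arbitrary k a).left p.1 ⊗ₜ[k]
    (Coalgebra.Repr.arbitrary k b).left p.2
  right := fun p => (Coalgebra.Repr.arbitrary k a).right p.1 ⊗ₜ[k]
    (Coalgebra.Repr.arbitrary k b).right p.2
  eq := by
    have : CoalgebraStruct.comul (R := k) (a ⊗ₜ[k] b) =
        TensorProduct.tensorTensorTensorComm k B B B B
          (TensorProduct.map Coalgebra.comul Coalgebra.comul (a ⊗ₜ[k] b)) := rfl
    rw [this, map_tmul, ← (Coalgebra.Repr.arbitrary k a).eq, ← (Coalgebra.Repr.arbitrary k b).eq,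
      sum_tmul]
    rw [map_sum, Finset.sum_product]
    refine Finset.sum_congr rfl fun i _ => ?_
    rw [tmul_sum, map_sum]
    refine Finset.sum_congr rfl fun j _ => ?_
    rw [tensorTensorTensorComm_tmul]

/-- Representation of the comultiplication of a product. -/
def mulRepr (a b : B) : Coalgebra.Repr k (a * b) ((B × B) × (B × B)) where
  index := (Coalgebra.Repr.arbitrary k a).index ×ˢ (Coalgebra.Repr.arbitrary k b).index
  left := fun p => (Coalgebra.Repr.arbitrary k a).left p.1 *
    (Coalgebra.Repr.arbitrary k b).left p.2
  right := fun p => (Coalgebra.Repr.arbitrary k a).right p.1 *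
    (Coalgebra.Repr.arbitrary k b).right p.2
  eq := by
    rw [Bialgebra.comul_mul, ← (Coalgebra.Repr.arbitrary k a).eq,
      ← (Coalgebra.Repr.arbitrary k b).eq, Finset.sum_mul_sum, Finset.sum_product]
    refine Finset.sum_congr rfl fun i _ => Finset.sum_congr rfl fun j _ => ?_
    rw [Algebra.TensorProduct.tmul_mul_tmul]

lemma antipode_mul' (a b : B) :
    antipode (R := k) (a * b) = antipode (R := k) b * antipode (R := k) a := by
  have h1 : conv ((antipode (R := k) (A := B)) ∘ₗ LinearMap.mul' k B) (LinearMap.mul' k B)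
      = convUnit := by
    apply TensorProduct.ext'
    intro a b
    rw [conv_apply_repr _ _ (tmulRepr a b), convUnit_apply]
    have key := sum_antipode_mul_eq_algebraMap_counit (R := k) (mulRepr a b)
    calc ∑ p ∈ (tmulRepr (k := k) a b).index,
          ((antipode (R := k) (A := B)) ∘ₗ LinearMap.mul' k B) ((tmulRepr (k := k) a b).left p) *
          LinearMap.mul' k B ((tmulRepr (k := k) a b).right p)
        = ∑ p ∈ (mulRepr (k := k) a b).index,
            antipode (R := k) ((mulRepr (k := k) a b).left p) *
            ((mulRepr (k := k) a b).right p) := by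
          refine Finset.sum_congr rfl fun p _ => ?_
          simp [tmulRepr, mulRepr]
      _ = algebraMap k B (counit (R := k) (a * b)) := key
      _ = algebraMap k B (counit (R := k) (a ⊗ₜ[k] b)) := by
          rw [Bialgebra.counit_mul]
          rw [TensorProduct.counit_tmul, smul_eq_mul, mul_comm]
  have h2 : conv (LinearMap.mul' k B) (LinearMap.mul' k B ∘ₗ
      TensorProduct.map (antipode (R := k)) (antipode (R := k)) ∘ₗ
      (TensorProduct.comm k B B).toLinearMap) = convUnit := by
    apply TensorProduct.ext'
    intro a b
    rw [conv_apply_repr _ _ (tmulRepr a b), convUnit_apply]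
    have keya := sum_mul_antipode_eq_algebraMap_counit (R := k) (Coalgebra.Repr.arbitrary k a)
    have keyb := sum_mul_antipode_eq_algebraMap_counit (R := k) (Coalgebra.Repr.arbitrary k b)
    set ra := Coalgebra.Repr.arbitrary k a
    set rb := Coalgebra.Repr.arbitrary k b
    calc ∑ p ∈ (tmulRepr (k := k) a b).index,
          LinearMap.mul' k B ((tmulRepr (k := k) a b).left p) *
          (LinearMap.mul' k B ∘ₗ TensorProduct.map (antipode (R := k)) (antipode (R := k)) ∘ₗ
            (TensorProduct.comm k B B).toLinearMap) ((tmulRepr (k := k) a b).right p)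
        = ∑ i ∈ ra.index, ∑ j ∈ rb.index,
            LinearMap.mul' k B ((tmulRepr (k := k) a b).left (i, j)) *
            (LinearMap.mul' k B ∘ₗ TensorProduct.map (antipode (R := k)) (antipode (R := k)) ∘ₗ
              (TensorProduct.comm k B B).toLinearMap) ((tmulRepr (k := k) a b).right (i, j)) :=
          Finset.sum_product _ _ _
      _ = ∑ i ∈ ra.index, ∑ j ∈ rb.index, ra.left i * ((rb.left j *
            antipode (R := k) (rb.right j)) * antipode (R := k) (ra.right i)) := by
          refine Finset.sum_congr rfl fun i _ => Finset.sum_congr rfl fun j _ => ?_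
          simp only [tmulRepr, LinearMap.comp_apply, LinearEquiv.coe_coe, comm_tmul,
            map_tmul, LinearMap.mul'_apply, mul_assoc]
          rfl
      _ = ∑ i ∈ ra.index, ra.left i * (algebraMap k B (counit (R := k) b) *
            antipode (R := k) (ra.right i)) := by
          refine Finset.sum_congr rfl fun i _ => ?_
          rw [← Finset.mul_sum, ← Finset.sum_mul, keyb]
      _ = algebraMap k B (counit (R := k) b) * ∑ i ∈ ra.index,
            ra.left i * antipode (R := k) (ra.right i) := by
          rw [Finset.mul_sum]
          refine Finset.sum_congr rfl fun i _ => ?_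
          rw [← mul_assoc, ← Algebra.commutes (counit (R := k) b) (ra.left i), mul_assoc]
      _ = algebraMap k B (counit (R := k) (a ⊗ₜ[k] b)) := by
          rw [keya, ← map_mul]
          have : counit (R := k) (a ⊗ₜ[k] b) =
              counit (R := k) a * counit (R := k) b :=
              (TensorProduct.counit_tmul a b).trans (mul_comm _ _)
          rw [this, mul_comm]
  have := conv_cancel h1 h2
  have ev := congr($(this) (a ⊗ₜ[k] b))
  simpa using ev

end AntipodeMul


section Pushout

open HopfAlgebra Coalgebra Bialgebra

variable {H K : Type u} [Ring H] [Ring K] [HopfAlgebra k H] [HopfAlgebra k K]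

/-- The relation presenting the amalgamated free product `K ⊔_H K`. -/
inductive Rel (f : H →ₐc[k] K) : FreeAlgebra k (K ⊕ K) → FreeAlgebra k (K ⊕ K) → Prop
  | add_l (x y : K) : Rel f (FreeAlgebra.ι k (Sum.inl (x + y)))
      (FreeAlgebra.ι k (Sum.inl x) + FreeAlgebra.ι k (Sum.inl y))
  | add_r (x y : K) : Rel f (FreeAlgebra.ι k (Sum.inr (x + y)))
      (FreeAlgebra.ι k (Sum.inr x) + FreeAlgebra.ι k (Sum.inr y))
  | smul_l (c : k) (x : K) : Rel f (FreeAlgebra.ι k (Sum.inl (c • x)))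
      (c • FreeAlgebra.ι k (Sum.inl x))
  | smul_r (c : k) (x : K) : Rel f (FreeAlgebra.ι k (Sum.inr (c • x)))
      (c • FreeAlgebra.ι k (Sum.inr x))
  | mul_l (x y : K) : Rel f (FreeAlgebra.ι k (Sum.inl (x * y)))
      (FreeAlgebra.ι k (Sum.inl x) * FreeAlgebra.ι k (Sum.inl y))
  | mul_r (x y : K) : Rel f (FreeAlgebra.ι k (Sum.inr (x * y)))
      (FreeAlgebra.ι k (Sum.inr x) * FreeAlgebra.ι k (Sum.inr y))
  | one_l : Rel f (FreeAlgebra.ι k (Sum.inl 1)) 1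
  | one_r : Rel f (FreeAlgebra.ι k (Sum.inr 1)) 1
  | glue (h : H) : Rel f (FreeAlgebra.ι k (Sum.inl (f h))) (FreeAlgebra.ι k (Sum.inr (f h)))

variable (f : H →ₐc[k] K)

/-- The pushout (amalgamated free product) `K ⊔_H K`. -/
def Push := RingQuot (Rel f)

instance : Ring (Push f) := inferInstanceAs (Ring (RingQuot (Rel f)))
instance : Algebra k (Push f) := inferInstanceAs (Algebra k (RingQuot (Rel f)))

/-- The quotient map. -/
def mkP : FreeAlgebra k (K ⊕ K) →ₐ[k] Push f := RingQuot.mkAlgHom k (Rel f)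

lemma mk_rel {x y : FreeAlgebra k (K ⊕ K)} (h : Rel f x y) : mkP f x = mkP f y :=
  RingQuot.mkAlgHom_rel k h

/-- The first inclusion `K → K ⊔_H K`. -/
def incl₁ : K →ₐ[k] Push f where
  toFun x := mkP f (FreeAlgebra.ι k (Sum.inl x))
  map_one' := show mkP f (FreeAlgebra.ι k (Sum.inl (1 : K))) = 1 by
    rw [mk_rel f Rel.one_l, map_one]
  map_mul' x y := show mkP f (FreeAlgebra.ι k (Sum.inl (x * y))) = _ * _ by
    rw [mk_rel f (Rel.mul_l x y), map_mul]
  map_zero' := show mkP f (FreeAlgebra.ι k (Sum.inl (0 : K))) = 0 by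
    rw [show (0 : K) = (0 : k) • (0 : K) by simp, mk_rel f (Rel.smul_l 0 0),
      map_smul, zero_smul]
  map_add' x y := show mkP f (FreeAlgebra.ι k (Sum.inl (x + y))) = _ + _ by
    rw [mk_rel f (Rel.add_l x y), map_add]
  commutes' c := show mkP f (FreeAlgebra.ι k (Sum.inl (algebraMap k K c))) = _ by
    rw [Algebra.algebraMap_eq_smul_one (A := K), mk_rel f (Rel.smul_l c 1),
      map_smul, mk_rel f Rel.one_l, map_one, Algebra.algebraMap_eq_smul_one]

/-- The second inclusion `K → K ⊔_H K`. -/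
def incl₂ : K →ₐ[k] Push f where
  toFun x := mkP f (FreeAlgebra.ι k (Sum.inr x))
  map_one' := show mkP f (FreeAlgebra.ι k (Sum.inr (1 : K))) = 1 by
    rw [mk_rel f Rel.one_r, map_one]
  map_mul' x y := show mkP f (FreeAlgebra.ι k (Sum.inr (x * y))) = _ * _ by
    rw [mk_rel f (Rel.mul_r x y), map_mul]
  map_zero' := show mkP f (FreeAlgebra.ι k (Sum.inr (0 : K))) = 0 by
    rw [show (0 : K) = (0 : k) • (0 : K) by simp, mk_rel f (Rel.smul_r 0 0),
      map_smul, zero_smul]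
  map_add' x y := show mkP f (FreeAlgebra.ι k (Sum.inr (x + y))) = _ + _ by
    rw [mk_rel f (Rel.add_r x y), map_add]
  commutes' c := show mkP f (FreeAlgebra.ι k (Sum.inr (algebraMap k K c))) = _ by
    rw [Algebra.algebraMap_eq_smul_one (A := K), mk_rel f (Rel.smul_r c 1),
      map_smul, mk_rel f Rel.one_r, map_one, Algebra.algebraMap_eq_smul_one]

lemma glue_eq (h : H) : incl₁ f (f h) = incl₂ f (f h) :=
  RingQuot.mkAlgHom_rel k (Rel.glue h)

section Lift

variable {T : Type*} [Ring T] [Algebra k T]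
variable (g₁ g₂ : K →ₐ[k] T) (hg : ∀ h, g₁ (f h) = g₂ (f h))

/-- The universal property of the pushout. -/
def liftP : Push f →ₐ[k] T :=
  RingQuot.liftAlgHom k ⟨FreeAlgebra.lift k (Sum.elim g₁ g₂), by
    rintro x y h
    induction h with
    | add_l x y => simp
    | add_r x y => simp
    | smul_l c x => simp
    | smul_r c x => simp
    | mul_l x y => simp
    | mul_r x y => simp
    | one_l => simp
    | one_r => simp
    | glue h => simpa using hg h⟩

@[simp] lemma liftP_incl₁ (x : K) : liftP f g₁ g₂ hg (incl₁ f x) = g₁ x := by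
  show RingQuot.liftAlgHom k _ (RingQuot.mkAlgHom k (Rel f) _) = _
  rw [RingQuot.liftAlgHom_mkAlgHom_apply, FreeAlgebra.lift_ι_apply]
  rfl

@[simp] lemma liftP_incl₂ (x : K) : liftP f g₁ g₂ hg (incl₂ f x) = g₂ x := by
  show RingQuot.liftAlgHom k _ (RingQuot.mkAlgHom k (Rel f) _) = _
  rw [RingQuot.liftAlgHom_mkAlgHom_apply, FreeAlgebra.lift_ι_apply]
  rfl

end Lift

/-- Induction principle for the pushout. -/
theorem Push.induction {motive : Push f → Prop}
    (h1 : ∀ x, motive (incl₁ f x)) (h2 : ∀ x, motive (incl₂ f x))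
    (hmul : ∀ a b, motive a → motive b → motive (a * b))
    (hadd : ∀ a b, motive a → motive b → motive (a + b))
    (p : Push f) : motive p := by
  obtain ⟨y, rfl⟩ := RingQuot.mkAlgHom_surjective k (Rel f) p
  induction y with
  | grade0 c =>
    have : (RingQuot.mkAlgHom k (Rel f)) (algebraMap k _ c) = incl₁ f (algebraMap k K c) := by
      rw [AlgHom.commutes, AlgHom.commutes]; rfl
    rw [this]; exact h1 _
  | grade1 x =>
    rcases x with x | x
    · exact h1 x
    · exact h2 x
  | mul a b ha hb => rw [map_mul]; exact hmul _ _ ha hb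
  | add a b ha hb => rw [map_add]; exact hadd _ _ ha hb

/-- Algebra maps out of the pushout are determined by their restriction to the two copies. -/
theorem Push.hom_ext {T : Type*} [Ring T] [Algebra k T] {F G : Push f →ₐ[k] T}
    (e1 : ∀ x, F (incl₁ f x) = G (incl₁ f x)) (e2 : ∀ x, F (incl₂ f x) = G (incl₂ f x)) :
    F = G := by
  apply DFunLike.ext
  intro p
  induction p using Push.induction f with
  | h1 x => exact e1 x
  | h2 x => exact e2 x
  | hmul a b ha hb => rw [map_mul, map_mul, ha, hb]
  | hadd a b ha hb => rw [map_add, map_add, ha, hb]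

section HopfStructure

open Bialgebra

/-- Comultiplication on the pushout. -/
def comulP : Push f →ₐ[k] Push f ⊗[k] Push f :=
  liftP f ((Algebra.TensorProduct.map (incl₁ f) (incl₁ f)).comp (comulAlgHom k K))
    ((Algebra.TensorProduct.map (incl₂ f) (incl₂ f)).comp (comulAlgHom k K))
    (fun h => by
      have key : (Algebra.TensorProduct.map (incl₁ f) (incl₁ f)).toLinearMap ∘ₗ
          TensorProduct.map f.toLinearMap f.toLinearMap =
          (Algebra.TensorProduct.map (incl₂ f) (incl₂ f)).toLinearMap ∘ₗ
          TensorProduct.map f.toLinearMap f.toLinearMap := by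
        apply TensorProduct.ext'
        intro x y
        simp only [LinearMap.comp_apply, TensorProduct.map_tmul, AlgHom.toLinearMap_apply,
          Algebra.TensorProduct.map_tmul, LinearMap.coe_coe]
        rw [show f.toLinearMap x = f x from rfl, show f.toLinearMap y = f y from rfl,
          glue_eq, glue_eq]
      have hcom := congr($(CoalgHomClass.map_comp_comul f) h)
      simp only [LinearMap.comp_apply, LinearMap.coe_coe] at hcom
      have ev := congr($key (Coalgebra.comul (R := k) h))
      simp only [LinearMap.comp_apply, AlgHom.toLinearMap_apply] at ev
      show Algebra.TensorProduct.map (incl₁ f) (incl₁ f) (comulAlgHom k K (f h)) =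
        Algebra.TensorProduct.map (incl₂ f) (incl₂ f) (comulAlgHom k K (f h))
      rw [comulAlgHom_apply, ← hcom]
      exact ev)

/-- Counit on the pushout. -/
def counitP : Push f →ₐ[k] k :=
  liftP f (counitAlgHom k K) (counitAlgHom k K) (fun _ => rfl)

@[simp] lemma comulP_incl₁ (x : K) :
    comulP f (incl₁ f x) =
      Algebra.TensorProduct.map (incl₁ f) (incl₁ f) (Coalgebra.comul (R := k) x) :=
  liftP_incl₁ f _ _ _ x

@[simp] lemma comulP_incl₂ (x : K) :
    comulP f (incl₂ f x) =
      Algebra.TensorProduct.map (incl₂ f) (incl₂ f) (Coalgebra.comul (R := k) x) :=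
  liftP_incl₂ f _ _ _ x

@[simp] lemma counitP_incl₁ (x : K) :
    counitP f (incl₁ f x) = Coalgebra.counit (R := k) x :=
  liftP_incl₁ f _ _ _ x

@[simp] lemma counitP_incl₂ (x : K) :
    counitP f (incl₂ f x) = Coalgebra.counit (R := k) x :=
  liftP_incl₂ f _ _ _ x

instance : Coalgebra k (Push f) where
  comul := (comulP f).toLinearMap
  counit := (counitP f).toLinearMap
  coassoc := by
    apply LinearMap.ext
    intro p
    simp only [LinearMap.comp_apply, AlgHom.toLinearMap_apply, LinearEquiv.coe_coe]
    induction p using Push.induction f with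
    | h1 x =>
      obtain r := Coalgebra.Repr.arbitrary k x
      have key := Coalgebra.sum_map_tmul_tmul_eq (R := k) (incl₁ f) (incl₁ f) (incl₁ f) x
        (repr := r) (a₁ := fun i => Coalgebra.Repr.arbitrary k (r.left i))
        (a₂ := fun i => Coalgebra.Repr.arbitrary k (r.right i))
      rw [comulP_incl₁, ← r.eq]
      simp only [map_sum, Algebra.TensorProduct.map_tmul, LinearMap.rTensor_tmul,
        LinearMap.lTensor_tmul, AlgHom.toLinearMap_apply]
      calc ∑ i ∈ r.index, (TensorProduct.assoc k _ _ _)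
            ((comulP f (incl₁ f (r.left i))) ⊗ₜ[k] incl₁ f (r.right i))
          = ∑ i ∈ r.index, ∑ j ∈ (Coalgebra.Repr.arbitrary k (r.left i)).index,
              incl₁ f ((Coalgebra.Repr.arbitrary k (r.left i)).left j) ⊗ₜ[k]
              (incl₁ f ((Coalgebra.Repr.arbitrary k (r.left i)).right j) ⊗ₜ[k]
                incl₁ f (r.right i)) := by
            refine Finset.sum_congr rfl fun i _ => ?_
            rw [comulP_incl₁, ← (Coalgebra.Repr.arbitrary k (r.left i)).eq]
            simp [map_sum, sum_tmul]
        _ = ∑ i ∈ r.index, ∑ j ∈ (Coalgebra.Repr.arbitrary k (r.right i)).index,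
              incl₁ f (r.left i) ⊗ₜ[k]
              (incl₁ f ((Coalgebra.Repr.arbitrary k (r.right i)).left j) ⊗ₜ[k]
                incl₁ f ((Coalgebra.Repr.arbitrary k (r.right i)).right j)) := key.symm
        _ = ∑ i ∈ r.index, incl₁ f (r.left i) ⊗ₜ[k] comulP f (incl₁ f (r.right i)) := by
            refine Finset.sum_congr rfl fun i _ => ?_
            rw [comulP_incl₁, ← (Coalgebra.Repr.arbitrary k (r.right i)).eq]
            simp [map_sum, tmul_sum]
    | h2 x =>
      obtain r := Coalgebra.Repr.arbitrary k x
      have key := Coalgebra.sum_map_tmul_tmul_eq (R := k) (incl₂ f) (incl₂ f) (incl₂ f) x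
        (repr := r) (a₁ := fun i => Coalgebra.Repr.arbitrary k (r.left i))
        (a₂ := fun i => Coalgebra.Repr.arbitrary k (r.right i))
      rw [comulP_incl₂, ← r.eq]
      simp only [map_sum, Algebra.TensorProduct.map_tmul, LinearMap.rTensor_tmul,
        LinearMap.lTensor_tmul, AlgHom.toLinearMap_apply]
      calc ∑ i ∈ r.index, (TensorProduct.assoc k _ _ _)
            ((comulP f (incl₂ f (r.left i))) ⊗ₜ[k] incl₂ f (r.right i))
          = ∑ i ∈ r.index, ∑ j ∈ (Coalgebra.Repr.arbitrary k (r.left i)).index,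
              incl₂ f ((Coalgebra.Repr.arbitrary k (r.left i)).left j) ⊗ₜ[k]
              (incl₂ f ((Coalgebra.Repr.arbitrary k (r.left i)).right j) ⊗ₜ[k]
                incl₂ f (r.right i)) := by
            refine Finset.sum_congr rfl fun i _ => ?_
            rw [comulP_incl₂, ← (Coalgebra.Repr.arbitrary k (r.left i)).eq]
            simp [map_sum, sum_tmul]
        _ = ∑ i ∈ r.index, ∑ j ∈ (Coalgebra.Repr.arbitrary k (r.right i)).index,
              incl₂ f (r.left i) ⊗ₜ[k]
              (incl₂ f ((Coalgebra.Repr.arbitrary k (r.right i)).left j) ⊗ₜ[k]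
                incl₂ f ((Coalgebra.Repr.arbitrary k (r.right i)).right j)) := key.symm
        _ = ∑ i ∈ r.index, incl₂ f (r.left i) ⊗ₜ[k] comulP f (incl₂ f (r.right i)) := by
            refine Finset.sum_congr rfl fun i _ => ?_
            rw [comulP_incl₂, ← (Coalgebra.Repr.arbitrary k (r.right i)).eq]
            simp [map_sum, tmul_sum]
    | hmul a b ha hb =>
      have hrT : ∀ u v : Push f ⊗[k] Push f,
          LinearMap.rTensor (Push f) (comulP f).toLinearMap (u * v) =
          LinearMap.rTensor (Push f) (comulP f).toLinearMap u *
          LinearMap.rTensor (Push f) (comulP f).toLinearMap v := fun u v =>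
        map_mul (Algebra.TensorProduct.map (comulP f) (AlgHom.id k (Push f))) u v
      have hlT : ∀ u v : Push f ⊗[k] Push f,
          LinearMap.lTensor (Push f) (comulP f).toLinearMap (u * v) =
          LinearMap.lTensor (Push f) (comulP f).toLinearMap u *
          LinearMap.lTensor (Push f) (comulP f).toLinearMap v := fun u v =>
        map_mul (Algebra.TensorProduct.map (AlgHom.id k (Push f)) (comulP f)) u v
      have hassoc : ∀ u v : (Push f ⊗[k] Push f) ⊗[k] Push f,
          TensorProduct.assoc k (Push f) (Push f) (Push f) (u * v) =
          TensorProduct.assoc k (Push f) (Push f) (Push f) u *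
          TensorProduct.assoc k (Push f) (Push f) (Push f) v := fun u v => by
        exact map_mul (Algebra.TensorProduct.assoc k k k (Push f) (Push f) (Push f)).toAlgHom u v
      rw [map_mul, hrT, hassoc, hlT, ha, hb]
    | hadd a b ha hb =>
      simp only [map_add, ha, hb]
  rTensor_counit_comp_comul := by
    apply LinearMap.ext
    intro p
    simp only [LinearMap.comp_apply, AlgHom.toLinearMap_apply]
    induction p using Push.induction f with
    | h1 x =>
      obtain r := Coalgebra.Repr.arbitrary k x
      rw [comulP_incl₁, ← r.eq]
      simp only [map_sum, Algebra.TensorProduct.map_tmul, LinearMap.rTensor_tmul,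
        AlgHom.toLinearMap_apply, counitP_incl₁]
      exact Coalgebra.sum_counit_tmul_map_eq (incl₁ f) x (repr := r)
    | h2 x =>
      obtain r := Coalgebra.Repr.arbitrary k x
      rw [comulP_incl₂, ← r.eq]
      simp only [map_sum, Algebra.TensorProduct.map_tmul, LinearMap.rTensor_tmul,
        AlgHom.toLinearMap_apply, counitP_incl₂]
      exact Coalgebra.sum_counit_tmul_map_eq (incl₂ f) x (repr := r)
    | hmul a b ha hb =>
      have hrT : ∀ u v : Push f ⊗[k] Push f,
          LinearMap.rTensor (Push f) (counitP f).toLinearMap (u * v) =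
          LinearMap.rTensor (Push f) (counitP f).toLinearMap u *
          LinearMap.rTensor (Push f) (counitP f).toLinearMap v := fun u v =>
        map_mul (Algebra.TensorProduct.map (counitP f) (AlgHom.id k (Push f))) u v
      rw [map_mul, hrT, ha, hb]
      simp [Algebra.TensorProduct.tmul_mul_tmul]
    | hadd a b ha hb =>
      rw [map_add, map_add, ha, hb, map_add]
  lTensor_counit_comp_comul := by
    apply LinearMap.ext
    intro p
    simp only [LinearMap.comp_apply, AlgHom.toLinearMap_apply]
    induction p using Push.induction f with
    | h1 x =>
      obtain r := Coalgebra.Repr.arbitrary k x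
      rw [comulP_incl₁, ← r.eq]
      simp only [map_sum, Algebra.TensorProduct.map_tmul, LinearMap.lTensor_tmul,
        AlgHom.toLinearMap_apply, counitP_incl₁]
      exact Coalgebra.sum_map_tmul_counit_eq (incl₁ f) x (repr := r)
    | h2 x =>
      obtain r := Coalgebra.Repr.arbitrary k x
      rw [comulP_incl₂, ← r.eq]
      simp only [map_sum, Algebra.TensorProduct.map_tmul, LinearMap.lTensor_tmul,
        AlgHom.toLinearMap_apply, counitP_incl₂]
      exact Coalgebra.sum_map_tmul_counit_eq (incl₂ f) x (repr := r)
    | hmul a b ha hb =>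
      have hlT : ∀ u v : Push f ⊗[k] Push f,
          LinearMap.lTensor (Push f) (counitP f).toLinearMap (u * v) =
          LinearMap.lTensor (Push f) (counitP f).toLinearMap u *
          LinearMap.lTensor (Push f) (counitP f).toLinearMap v := fun u v =>
        map_mul (Algebra.TensorProduct.map (AlgHom.id k (Push f)) (counitP f)) u v
      rw [map_mul, hlT, ha, hb]
      simp [Algebra.TensorProduct.tmul_mul_tmul]
    | hadd a b ha hb =>
      rw [map_add, map_add, ha, hb, map_add]

instance : Bialgebra k (Push f) :=
  Bialgebra.mk' k (Push f) ((counitP f).map_one) (fun {a b} => (counitP f).map_mul a b)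
    ((comulP f).map_one) (fun {a b} => (comulP f).map_mul a b)

open HopfAlgebra in
/-- The antipode composed with an inclusion, as a map to the opposite algebra. -/
def opAnti (g : K →ₐ[k] Push f) : K →ₐ[k] (Push f)ᵐᵒᵖ where
  toFun x := MulOpposite.op (g (antipode (R := k) x))
  map_one' := show MulOpposite.op (g (antipode (R := k) (1 : K))) = 1 by
    rw [antipode_one', map_one]; rfl
  map_mul' x y := show MulOpposite.op (g (antipode (R := k) (x * y))) = _ * _ by
    rw [antipode_mul' x y, map_mul, MulOpposite.op_mul]
  map_zero' := show MulOpposite.op (g (antipode (R := k) (0 : K))) = 0 by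
    rw [map_zero, map_zero]; rfl
  map_add' x y := show MulOpposite.op (g (antipode (R := k) (x + y))) = _ + _ by
    rw [map_add (antipode (R := k) (A := K)), map_add, MulOpposite.op_add]
  commutes' c := show MulOpposite.op (g (antipode (R := k) (algebraMap k K c))) = _ by
    rw [antipode_algebraMap', AlgHom.commutes]; rfl

open HopfAlgebra in
/-- The antipode of the pushout, as an algebra map to the opposite algebra. -/
def antiP : Push f →ₐ[k] (Push f)ᵐᵒᵖ :=
  liftP f (opAnti f (incl₁ f)) (opAnti f (incl₂ f)) (fun h => by
    show MulOpposite.op (incl₁ f (antipode (R := k) (f h))) =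
      MulOpposite.op (incl₂ f (antipode (R := k) (f h)))
    rw [antipode_map f h, glue_eq])

open HopfAlgebra in
/-- The antipode of the pushout. -/
def antipodeP : Push f →ₗ[k] Push f :=
  (MulOpposite.opLinearEquiv k).symm.toLinearMap ∘ₗ (antiP f).toLinearMap

open HopfAlgebra

@[simp] lemma antipodeP_incl₁ (x : K) :
    antipodeP f (incl₁ f x) = incl₁ f (antipode (R := k) x) := by
  simp only [antipodeP, LinearMap.comp_apply, AlgHom.toLinearMap_apply]
  rw [show antiP f (incl₁ f x) = opAnti f (incl₁ f) x from liftP_incl₁ f _ _ _ x]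
  rfl

@[simp] lemma antipodeP_incl₂ (x : K) :
    antipodeP f (incl₂ f x) = incl₂ f (antipode (R := k) x) := by
  simp only [antipodeP, LinearMap.comp_apply, AlgHom.toLinearMap_apply]
  rw [show antiP f (incl₂ f x) = opAnti f (incl₂ f) x from liftP_incl₂ f _ _ _ x]
  rfl

lemma antipodeP_mul (a b : Push f) :
    antipodeP f (a * b) = antipodeP f b * antipodeP f a := by
  simp only [antipodeP, LinearMap.comp_apply, AlgHom.toLinearMap_apply, map_mul]
  rfl

instance : HopfAlgebra k (Push f) where
  antipode := antipodeP f
  mul_antipode_rTensor_comul := by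
    apply LinearMap.ext
    intro p
    simp only [LinearMap.comp_apply, Algebra.linearMap_apply]
    induction p using Push.induction f with
    | h1 x =>
      obtain r := Coalgebra.Repr.arbitrary k x
      rw [show Coalgebra.comul (R := k) (A := Push f) ((incl₁ f) x) = comulP f (incl₁ f x)
          from rfl,
        show Coalgebra.counit (R := k) (A := Push f) ((incl₁ f) x) = counitP f (incl₁ f x)
          from rfl,
        comulP_incl₁, counitP_incl₁, ← r.eq]
      simp only [map_sum, Algebra.TensorProduct.map_tmul, LinearMap.rTensor_tmul,
        LinearMap.mul'_apply, antipodeP_incl₁]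
      calc ∑ i ∈ r.index, incl₁ f (antipode (R := k) (r.left i)) * incl₁ f (r.right i)
          = incl₁ f (∑ i ∈ r.index, antipode (R := k) (r.left i) * r.right i) := by
            rw [map_sum]; exact Finset.sum_congr rfl fun i _ => (map_mul _ _ _).symm
        _ = algebraMap k (Push f) (Coalgebra.counit (R := k) x) := by
            rw [sum_antipode_mul_eq_algebraMap_counit r, AlgHom.commutes]
    | h2 x =>
      obtain r := Coalgebra.Repr.arbitrary k x
      rw [show Coalgebra.comul (R := k) (A := Push f) ((incl₂ f) x) = comulP f (incl₂ f x)
          from rfl,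
        show Coalgebra.counit (R := k) (A := Push f) ((incl₂ f) x) = counitP f (incl₂ f x)
          from rfl,
        comulP_incl₂, counitP_incl₂, ← r.eq]
      simp only [map_sum, Algebra.TensorProduct.map_tmul, LinearMap.rTensor_tmul,
        LinearMap.mul'_apply, antipodeP_incl₂]
      calc ∑ i ∈ r.index, incl₂ f (antipode (R := k) (r.left i)) * incl₂ f (r.right i)
          = incl₂ f (∑ i ∈ r.index, antipode (R := k) (r.left i) * r.right i) := by
            rw [map_sum]; exact Finset.sum_congr rfl fun i _ => (map_mul _ _ _).symm
        _ = algebraMap k (Push f) (Coalgebra.counit (R := k) x) := by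
            rw [sum_antipode_mul_eq_algebraMap_counit r, AlgHom.commutes]
    | hmul a b ha hb =>
      obtain ra := Coalgebra.Repr.arbitrary k a
      obtain rb := Coalgebra.Repr.arbitrary k b
      have ha' : ∑ i ∈ ra.index, antipodeP f (ra.left i) * ra.right i =
          algebraMap k (Push f) (Coalgebra.counit (R := k) a) := by
        rw [← ha, ← ra.eq]
        simp [map_sum]
      have hb' : ∑ j ∈ rb.index, antipodeP f (rb.left j) * rb.right j =
          algebraMap k (Push f) (Coalgebra.counit (R := k) b) := by
        rw [← hb, ← rb.eq]
        simp [map_sum]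
      have hcm : Coalgebra.comul (R := k) (a * b) =
          Coalgebra.comul (R := k) a * Coalgebra.comul (R := k) b := Bialgebra.comul_mul a b
      rw [hcm, ← ra.eq, ← rb.eq, Finset.sum_mul_sum]
      simp only [Algebra.TensorProduct.tmul_mul_tmul, map_sum, LinearMap.rTensor_tmul,
        LinearMap.mul'_apply]
      calc ∑ i ∈ ra.index, ∑ j ∈ rb.index,
            antipodeP f (ra.left i * rb.left j) * (ra.right i * rb.right j)
          = ∑ j ∈ rb.index, ∑ i ∈ ra.index, antipodeP f (rb.left j) *
              ((antipodeP f (ra.left i) * ra.right i) * rb.right j) := by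
            rw [Finset.sum_comm]
            refine Finset.sum_congr rfl fun j _ => Finset.sum_congr rfl fun i _ => ?_
            rw [antipodeP_mul]
            simp only [mul_assoc]
        _ = ∑ j ∈ rb.index, antipodeP f (rb.left j) *
              (algebraMap k (Push f) (Coalgebra.counit (R := k) a) * rb.right j) := by
            refine Finset.sum_congr rfl fun j _ => ?_
            rw [← Finset.mul_sum, ← Finset.sum_mul, ha']
        _ = algebraMap k (Push f) (Coalgebra.counit (R := k) a) *
              ∑ j ∈ rb.index, antipodeP f (rb.left j) * rb.right j := by
            rw [Finset.mul_sum]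
            refine Finset.sum_congr rfl fun j _ => ?_
            rw [← mul_assoc, ← Algebra.commutes (Coalgebra.counit (R := k) a)
              (antipodeP f (rb.left j)), mul_assoc]
        _ = algebraMap k (Push f) (Coalgebra.counit (R := k) (a * b)) := by
            rw [hb', ← map_mul]
            congr 1
            exact ((counitP f).map_mul a b).symm
    | hadd a b ha hb =>
      simp only [map_add, ha, hb]
  mul_antipode_lTensor_comul := by
    apply LinearMap.ext
    intro p
    simp only [LinearMap.comp_apply, Algebra.linearMap_apply]
    induction p using Push.induction f with
    | h1 x =>
      obtain r := Coalgebra.Repr.arbitrary k x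
      rw [show Coalgebra.comul (R := k) (A := Push f) ((incl₁ f) x) = comulP f (incl₁ f x)
          from rfl,
        show Coalgebra.counit (R := k) (A := Push f) ((incl₁ f) x) = counitP f (incl₁ f x)
          from rfl,
        comulP_incl₁, counitP_incl₁, ← r.eq]
      simp only [map_sum, Algebra.TensorProduct.map_tmul, LinearMap.lTensor_tmul,
        LinearMap.mul'_apply, antipodeP_incl₁]
      calc ∑ i ∈ r.index, incl₁ f (r.left i) * incl₁ f (antipode (R := k) (r.right i))
          = incl₁ f (∑ i ∈ r.index, r.left i * antipode (R := k) (r.right i)) := by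
            rw [map_sum]; exact Finset.sum_congr rfl fun i _ => (map_mul _ _ _).symm
        _ = algebraMap k (Push f) (Coalgebra.counit (R := k) x) := by
            rw [sum_mul_antipode_eq_algebraMap_counit r, AlgHom.commutes]
    | h2 x =>
      obtain r := Coalgebra.Repr.arbitrary k x
      rw [show Coalgebra.comul (R := k) (A := Push f) ((incl₂ f) x) = comulP f (incl₂ f x)
          from rfl,
        show Coalgebra.counit (R := k) (A := Push f) ((incl₂ f) x) = counitP f (incl₂ f x)
          from rfl,
        comulP_incl₂, counitP_incl₂, ← r.eq]
      simp only [map_sum, Algebra.TensorProduct.map_tmul, LinearMap.lTensor_tmul,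
        LinearMap.mul'_apply, antipodeP_incl₂]
      calc ∑ i ∈ r.index, incl₂ f (r.left i) * incl₂ f (antipode (R := k) (r.right i))
          = incl₂ f (∑ i ∈ r.index, r.left i * antipode (R := k) (r.right i)) := by
            rw [map_sum]; exact Finset.sum_congr rfl fun i _ => (map_mul _ _ _).symm
        _ = algebraMap k (Push f) (Coalgebra.counit (R := k) x) := by
            rw [sum_mul_antipode_eq_algebraMap_counit r, AlgHom.commutes]
    | hmul a b ha hb =>
      obtain ra := Coalgebra.Repr.arbitrary k a
      obtain rb := Coalgebra.Repr.arbitrary k b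
      have ha' : ∑ i ∈ ra.index, ra.left i * antipodeP f (ra.right i) =
          algebraMap k (Push f) (Coalgebra.counit (R := k) a) := by
        rw [← ha, ← ra.eq]
        simp [map_sum]
      have hb' : ∑ j ∈ rb.index, rb.left j * antipodeP f (rb.right j) =
          algebraMap k (Push f) (Coalgebra.counit (R := k) b) := by
        rw [← hb, ← rb.eq]
        simp [map_sum]
      have hcm : Coalgebra.comul (R := k) (a * b) =
          Coalgebra.comul (R := k) a * Coalgebra.comul (R := k) b := Bialgebra.comul_mul a b
      rw [hcm, ← ra.eq, ← rb.eq, Finset.sum_mul_sum]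
      simp only [Algebra.TensorProduct.tmul_mul_tmul, map_sum, LinearMap.lTensor_tmul,
        LinearMap.mul'_apply]
      calc ∑ i ∈ ra.index, ∑ j ∈ rb.index,
            (ra.left i * rb.left j) * antipodeP f (ra.right i * rb.right j)
          = ∑ i ∈ ra.index, ∑ j ∈ rb.index, ra.left i *
              ((rb.left j * antipodeP f (rb.right j)) * antipodeP f (ra.right i)) := by
            refine Finset.sum_congr rfl fun i _ => Finset.sum_congr rfl fun j _ => ?_
            rw [antipodeP_mul]
            simp only [mul_assoc]
        _ = ∑ i ∈ ra.index, ra.left i *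
              (algebraMap k (Push f) (Coalgebra.counit (R := k) b) *
                antipodeP f (ra.right i)) := by
            refine Finset.sum_congr rfl fun i _ => ?_
            rw [← Finset.mul_sum, ← Finset.sum_mul, hb']
        _ = algebraMap k (Push f) (Coalgebra.counit (R := k) b) *
              ∑ i ∈ ra.index, ra.left i * antipodeP f (ra.right i) := by
            rw [Finset.mul_sum]
            refine Finset.sum_congr rfl fun i _ => ?_
            rw [← mul_assoc, ← Algebra.commutes (Coalgebra.counit (R := k) b)
              (ra.left i), mul_assoc]
        _ = algebraMap k (Push f) (Coalgebra.counit (R := k) (a * b)) := by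
            rw [ha', ← map_mul]
            congr 1
            rw [mul_comm]
            exact ((counitP f).map_mul a b).symm
    | hadd a b ha hb =>
      simp only [map_add, ha, hb]


/-- The first inclusion as a bialgebra morphism. -/
def incl₁Bialg : K →ₐc[k] Push f :=
  { (incl₁ f).toLinearMap, incl₁ f with
    counit_comp := by
      apply LinearMap.ext
      intro x
      exact counitP_incl₁ f x
    map_comp_comul := by
      apply LinearMap.ext
      intro x
      exact (comulP_incl₁ f x).symm }

/-- The second inclusion as a bialgebra morphism. -/
def incl₂Bialg : K →ₐc[k] Push f :=
  { (incl₂ f).toLinearMap, incl₂ f with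
    counit_comp := by
      apply LinearMap.ext
      intro x
      exact counitP_incl₂ f x
    map_comp_comul := by
      apply LinearMap.ext
      intro x
      exact (comulP_incl₂ f x).symm }

@[simp] lemma incl₁Bialg_apply (x : K) : incl₁Bialg f x = incl₁ f x := rfl
@[simp] lemma incl₂Bialg_apply (x : K) : incl₂Bialg f x = incl₂ f x := rfl

end HopfStructure

end Pushout

end HopfEpiAux

open CategoryTheory HopfEpiAux

/-- a morphism of Hopf algebras over a field `k` is an epimorphism in the
category of Hopf algebras if and only if its underlying algebra map is an epimorphism in the
category of `k`-algebras. -/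
theorem hopf_epi_iff_alg_epi (k : Type u) [Field k] {H K : HopfAlgCat.{u} k} (f : H ⟶ K) :
    Epi f ↔
      Epi ((forget₂ (HopfAlgCat k) (BialgCat k) ⋙
        forget₂ (BialgCat k) (AlgCat k)).map f) := by
  constructor
  · intro hf
    set fb := f.toBialgHom with hfb
    -- the two inclusions into the Hopf-algebra pushout agree, since `f` is an epimorphism
    have hincl : ∀ x : ↑K, incl₁ fb x = incl₂ fb x := by
      have hcomp : f ≫ (HopfAlgCat.Hom.mk (incl₁Bialg fb) :
            K ⟶ HopfAlgCat.of k (Push fb)) =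
          f ≫ (HopfAlgCat.Hom.mk (incl₂Bialg fb) :
            K ⟶ HopfAlgCat.of k (Push fb)) := by
        apply HopfAlgCat.hom_ext
        apply DFunLike.ext
        intro h
        exact glue_eq fb h
      have := hf.left_cancellation _ _ hcomp
      intro x
      exact congr(($this).toBialgHom x)
    constructor
    intro T g₁ g₂ hT
    have hg : ∀ h : ↑H, g₁.hom (fb h) = g₂.hom (fb h) := by
      intro h
      exact congr(($hT).hom h)
    apply AlgCat.hom_ext
    apply AlgHom.ext
    intro x
    calc g₁.hom x = liftP fb g₁.hom g₂.hom hg (incl₁ fb x) := (liftP_incl₁ fb _ _ hg x).symm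
      _ = liftP fb g₁.hom g₂.hom hg (incl₂ fb x) := by rw [hincl x]
      _ = g₂.hom x := liftP_incl₂ fb _ _ hg x
  · intro h
    exact (forget₂ (HopfAlgCat k) (BialgCat k) ⋙
      forget₂ (BialgCat k) (AlgCat k)).epi_of_epi_map h
end

section
/- Let C and D be categories and U : C → D a functor admitting both a left adjoint F : D → C, with adjunction F ⊣ U and unit α : 1_D ⟶ F ⋙ U (components α_d : d → U(F(d))), and a right adjoint G : D → C, with adjunction U ⊣ G and counit β : G ⋙ U ⟶ 1_D (components β_d : U(G(d)) → d). Then α_d is an epimorphism in D for every object d of D if and only if β_d is a monomorphism in D for every object d of D. -/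
open CategoryTheory

/-- if a functor `U : C ⥤ D` has a left adjoint `F` (with unit `α`) and a right
adjoint `G` (with counit `β`), then all components of `α` are epimorphisms iff all components of
`β` are monomorphisms. -/
theorem unit_epi_iff_counit_mono {C : Type u₁} {D : Type u₂} [Category.{v₁} C] [Category.{v₂} D]
    (U : C ⥤ D) (F G : D ⥤ C) (adj₁ : F ⊣ U) (adj₂ : U ⊣ G) :
    (∀ d : D, Epi (adj₁.unit.app d)) ↔ (∀ d : D, Mono (adj₂.counit.app d)) := by
  constructor
  · intro hα e
    constructor
    intro Z g g' H
    obtain ⟨h, rfl⟩ := (adj₁.homEquiv Z (G.obj e)).surjective g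
    obtain ⟨h', rfl⟩ := (adj₁.homEquiv Z (G.obj e)).surjective g'
    simp only [Adjunction.homEquiv_unit, Category.assoc] at H ⊢
    have := hα Z
    have H2 : U.map h ≫ adj₂.counit.app e = U.map h' ≫ adj₂.counit.app e :=
      (cancel_epi (adj₁.unit.app Z)).mp H
    have H3 : (adj₂.homEquiv (F.obj Z) e).symm h = (adj₂.homEquiv (F.obj Z) e).symm h' := by
      rw [Adjunction.homEquiv_counit, Adjunction.homEquiv_counit, H2]
    rw [(adj₂.homEquiv (F.obj Z) e).symm.injective H3]
  · intro hβ d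
    constructor
    intro Z f f' H
    obtain ⟨h, rfl⟩ := (adj₂.homEquiv (F.obj d) Z).symm.surjective f
    obtain ⟨h', rfl⟩ := (adj₂.homEquiv (F.obj d) Z).symm.surjective f'
    simp only [Adjunction.homEquiv_counit] at H ⊢
    have := hβ Z
    have H2 : adj₁.unit.app d ≫ U.map h = adj₁.unit.app d ≫ U.map h' :=
      (cancel_mono (adj₂.counit.app Z)).mp (by simpa [Category.assoc] using H)
    have H3 : adj₁.homEquiv d (G.obj Z) h = adj₁.homEquiv d (G.obj Z) h' := by
      rw [Adjunction.homEquiv_unit, Adjunction.homEquiv_unit, H2]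
    rw [(adj₁.homEquiv d (G.obj Z)).injective H3]
end

section
/- Let k be a field, U : HopfAlg_k → BiAlg_k the forgetful functor from Hopf algebras to bialgebras over k, and G : BiAlg_k → HopfAlg_k any right adjoint of U, with adjunction U ⊣ G and counit β. Then for every bialgebra B over k, the counit component β_B : U(G(B)) → B is a monomorphism in the category of bialgebras over k. -/
open TensorProduct Coalgebra HopfAlgebra

universe u

namespace CounitMonoAux

section Conv

variable {k : Type u} [CommRing k]
variable {C : Type u} [AddCommGroup C] [Module k C] [Coalgebra k C]
variable {A : Type u} [Ring A] [Algebra k A]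

/-- Convolution product on linear maps from a coalgebra to an algebra. -/
noncomputable def conv (φ ψ : C →ₗ[k] A) : C →ₗ[k] A :=
  LinearMap.mul' k A ∘ₗ TensorProduct.map φ ψ ∘ₗ (Coalgebra.comul : C →ₗ[k] C ⊗[k] C)

/-- The convolution unit. -/
noncomputable def cunit : C →ₗ[k] A :=
  Algebra.linearMap k A ∘ₗ (Coalgebra.counit : C →ₗ[k] k)

lemma cunit_apply (x : C) :
    (cunit (k := k) (A := A) x) = Coalgebra.counit (R := k) x • (1 : A) := by
  simp [cunit, Algebra.smul_def, mul_one]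

lemma conv_repr (φ ψ : C →ₗ[k] A) {x : C} {ι : Type*} (r : Coalgebra.Repr k x ι) :
    conv φ ψ x = ∑ i ∈ r.index, φ (r.left i) * ψ (r.right i) := by
  simp only [conv, LinearMap.comp_apply, ← r.eq, map_sum, TensorProduct.map_tmul,
    LinearMap.mul'_apply]

lemma sum_counit_smul_right {x : C} {ι : Type*} (r : Coalgebra.Repr k x ι) :
    ∑ i ∈ r.index, Coalgebra.counit (R := k) (r.left i) • r.right i = x := by
  have h := Coalgebra.sum_counit_tmul_eq (R := k) r
  calc ∑ i ∈ r.index, Coalgebra.counit (R := k) (r.left i) • r.right i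
      = TensorProduct.lid k C
          (∑ i ∈ r.index, Coalgebra.counit (R := k) (r.left i) ⊗ₜ[k] r.right i) := by
        rw [map_sum]; rfl
    _ = TensorProduct.lid k C ((1 : k) ⊗ₜ[k] x) := by rw [h]
    _ = x := by simp

lemma sum_counit_smul_left {x : C} {ι : Type*} (r : Coalgebra.Repr k x ι) :
    ∑ i ∈ r.index, Coalgebra.counit (R := k) (r.right i) • r.left i = x := by
  have h := Coalgebra.sum_tmul_counit_eq (R := k) r
  calc ∑ i ∈ r.index, Coalgebra.counit (R := k) (r.right i) • r.left i
      = TensorProduct.rid k C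
          (∑ i ∈ r.index, r.left i ⊗ₜ[k] Coalgebra.counit (R := k) (r.right i)) := by
        rw [map_sum]; rfl
    _ = TensorProduct.rid k C (x ⊗ₜ[k] (1 : k)) := by rw [h]
    _ = x := by simp

lemma conv_cunit_left (φ : C →ₗ[k] A) : conv cunit φ = φ := by
  ext x
  obtain r := Coalgebra.Repr.arbitrary k x
  rw [conv_repr _ _ r]
  calc ∑ i ∈ r.index, cunit (k := k) (A := A) (r.left i) * φ (r.right i)
      = ∑ i ∈ r.index, Coalgebra.counit (R := k) (r.left i) • φ (r.right i) := by
        refine Finset.sum_congr rfl fun i _ => ?_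
        rw [cunit_apply, smul_mul_assoc, one_mul]
    _ = φ (∑ i ∈ r.index, Coalgebra.counit (R := k) (r.left i) • r.right i) := by
        rw [map_sum]; exact Finset.sum_congr rfl fun i _ => (map_smul φ _ _).symm
    _ = φ x := by rw [sum_counit_smul_right r]

lemma conv_cunit_right (φ : C →ₗ[k] A) : conv φ cunit = φ := by
  ext x
  obtain r := Coalgebra.Repr.arbitrary k x
  rw [conv_repr _ _ r]
  calc ∑ i ∈ r.index, φ (r.left i) * cunit (k := k) (A := A) (r.right i)
      = ∑ i ∈ r.index, Coalgebra.counit (R := k) (r.right i) • φ (r.left i) := by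
        refine Finset.sum_congr rfl fun i _ => ?_
        rw [cunit_apply, mul_smul_comm, mul_one]
    _ = φ (∑ i ∈ r.index, Coalgebra.counit (R := k) (r.right i) • r.left i) := by
        rw [map_sum]; exact Finset.sum_congr rfl fun i _ => (map_smul φ _ _).symm
    _ = φ x := by rw [sum_counit_smul_left r]

lemma conv_assoc (φ ψ χ : C →ₗ[k] A) : conv (conv φ ψ) χ = conv φ (conv ψ χ) := by
  ext x
  obtain r := Coalgebra.Repr.arbitrary k x
  set r₁ : (i : r.ι) → Coalgebra.Repr k (r.left i) (C × C) := fun i => Coalgebra.Repr.arbitrary k _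
  set r₂ : (i : r.ι) → Coalgebra.Repr k (r.right i) (C × C) := fun i => Coalgebra.Repr.arbitrary k _
  have key := Coalgebra.sum_map_tmul_tmul_eq (R := k) φ ψ χ x (repr := r) (a₁ := r₁) (a₂ := r₂)
  -- apply the linear map A ⊗ (A ⊗ A) →ₗ A, x ⊗ (y ⊗ z) ↦ x * (y * z)
  set M : A ⊗[k] (A ⊗[k] A) →ₗ[k] A :=
    LinearMap.mul' k A ∘ₗ LinearMap.lTensor A (LinearMap.mul' k A)
  have hM : ∀ (x y z : A), M (x ⊗ₜ (y ⊗ₜ z)) = x * (y * z) := fun x y z => by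
    simp [M]
  have key2 := congrArg M key
  simp only [map_sum, hM] at key2
  rw [conv_repr (conv φ ψ) χ r, conv_repr φ (conv ψ χ) r]
  calc ∑ i ∈ r.index, conv φ ψ (r.left i) * χ (r.right i)
      = ∑ i ∈ r.index, ∑ j ∈ (r₁ i).index,
          φ ((r₁ i).left j) * (ψ ((r₁ i).right j) * χ (r.right i)) := by
        refine Finset.sum_congr rfl fun i _ => ?_
        rw [conv_repr φ ψ (r₁ i), Finset.sum_mul]
        exact Finset.sum_congr rfl fun j _ => by rw [mul_assoc]
    _ = ∑ i ∈ r.index, ∑ j ∈ (r₂ i).index,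
          φ (r.left i) * (ψ ((r₂ i).left j) * χ ((r₂ i).right j)) := key2.symm
    _ = ∑ i ∈ r.index, φ (r.left i) * conv ψ χ (r.right i) := by
        refine Finset.sum_congr rfl fun i _ => ?_
        rw [conv_repr ψ χ (r₂ i), Finset.mul_sum]

lemma conv_add_left (φ φ' ψ : C →ₗ[k] A) : conv (φ + φ') ψ = conv φ ψ + conv φ' ψ := by
  unfold conv
  rw [TensorProduct.map_add_left]
  ext x
  simp

lemma conv_add_right (φ ψ ψ' : C →ₗ[k] A) : conv φ (ψ + ψ') = conv φ ψ + conv φ ψ' := by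
  unfold conv
  rw [TensorProduct.map_add_right]
  ext x
  simp

lemma conv_sub_left (φ φ' ψ : C →ₗ[k] A) : conv (φ - φ') ψ = conv φ ψ - conv φ' ψ := by
  have := conv_add_left (φ - φ') φ' ψ
  rw [sub_add_cancel] at this
  rw [this]; abel

lemma conv_sub_right (φ ψ ψ' : C →ₗ[k] A) : conv φ (ψ - ψ') = conv φ ψ - conv φ ψ' := by
  have := conv_add_right φ (ψ - ψ') ψ'
  rw [sub_add_cancel] at this
  rw [this]; abel

end Conv


section Antipode

variable {k : Type u} [CommRing k] {H : Type u} [Ring H] [HopfAlgebra k H]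

/-- Product of two representations. -/
noncomputable def Repr.mul {a b : H} {ι κ : Type*} (ra : Coalgebra.Repr k a ι)
    (rb : Coalgebra.Repr k b κ) :
    Coalgebra.Repr k (a * b) (ι × κ) where
  index := ra.index ×ˢ rb.index
  left := fun p => ra.left p.1 * rb.left p.2
  right := fun p => ra.right p.1 * rb.right p.2
  eq := by
    rw [Finset.sum_product]
    rw [Bialgebra.comul_mul (R := k) a b, ← ra.eq, ← rb.eq, Finset.sum_mul_sum]
    refine Finset.sum_congr rfl fun i _ => Finset.sum_congr rfl fun j _ => ?_
    rw [Algebra.TensorProduct.tmul_mul_tmul]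

lemma comul_tmul (a b : H) :
    Coalgebra.comul (R := k) (A := H ⊗[k] H) (a ⊗ₜ[k] b) =
      TensorProduct.tensorTensorTensorComm k H H H H
        (Coalgebra.comul (R := k) a ⊗ₜ[k] Coalgebra.comul (R := k) b) := by
  have h := Bialgebra.TensorProduct.comul_eq_algHom_toLinearMap k k H H
  rw [h]
  rfl

lemma counit_tmul (a b : H) :
    Coalgebra.counit (R := k) (A := H ⊗[k] H) (a ⊗ₜ[k] b) =
      Coalgebra.counit (R := k) a * Coalgebra.counit (R := k) b := by
  have h := Bialgebra.TensorProduct.counit_eq_algHom_toLinearMap k k H H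
  rw [h]
  simp [Algebra.TensorProduct.lmul'_apply_tmul]
  exact mul_comm _ _

/-- Representation of a pure tensor. -/
noncomputable def Repr.tmul {a b : H} {ι κ : Type*} (ra : Coalgebra.Repr k a ι)
    (rb : Coalgebra.Repr k b κ) :
    Coalgebra.Repr k (a ⊗ₜ[k] b : H ⊗[k] H) (ι × κ) where
  index := ra.index ×ˢ rb.index
  left := fun p => ra.left p.1 ⊗ₜ[k] rb.left p.2
  right := fun p => ra.right p.1 ⊗ₜ[k] rb.right p.2
  eq := by
    rw [Finset.sum_product, comul_tmul, ← ra.eq, ← rb.eq, TensorProduct.sum_tmul]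
    rw [map_sum]
    refine Finset.sum_congr rfl fun i _ => ?_
    rw [TensorProduct.tmul_sum, map_sum]
    refine Finset.sum_congr rfl fun j _ => ?_
    rw [TensorProduct.tensorTensorTensorComm_tmul]

theorem antipode_one' : antipode (R := k) (1 : H) = 1 := by
  have h := HopfAlgebra.mul_antipode_rTensor_comul_apply (R := k) (1 : H)
  rw [Bialgebra.comul_one, Algebra.TensorProduct.one_def] at h
  simpa using h

theorem antipode_mul' (a b : H) :
    antipode (R := k) (a * b) = antipode (R := k) b * antipode (R := k) a := by
  set F : (H ⊗[k] H) →ₗ[k] H := LinearMap.mul' k H with hF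
  set G₁ : (H ⊗[k] H) →ₗ[k] H := antipode (R := k) ∘ₗ LinearMap.mul' k H with hG₁
  set G₂ : (H ⊗[k] H) →ₗ[k] H :=
    LinearMap.mul' k H ∘ₗ TensorProduct.map (antipode (R := k)) (antipode (R := k)) ∘ₗ
      (TensorProduct.comm k H H).toLinearMap with hG₂
  have h1 : conv F G₁ = cunit := by
    apply TensorProduct.ext'
    intro a b
    obtain ra := Coalgebra.Repr.arbitrary k a
    obtain rb := Coalgebra.Repr.arbitrary k b
    rw [conv_repr F G₁ (Repr.tmul ra rb)]
    have : ∑ p ∈ (Repr.tmul ra rb).index,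
        F ((Repr.tmul ra rb).left p) * G₁ ((Repr.tmul ra rb).right p)
        = ∑ p ∈ (Repr.mul ra rb).index,
            (Repr.mul ra rb).left p * antipode (R := k) ((Repr.mul ra rb).right p) := by
      refine Finset.sum_congr rfl fun p _ => ?_
      simp only [hF, hG₁, Repr.tmul, Repr.mul, LinearMap.comp_apply, LinearMap.mul'_apply]
    rw [this, HopfAlgebra.sum_mul_antipode_eq_smul (Repr.mul ra rb)]
    rw [cunit_apply, counit_tmul, Bialgebra.counit_mul]
  have h2 : conv G₂ F = cunit := by
    apply TensorProduct.ext'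
    intro a b
    obtain ra := Coalgebra.Repr.arbitrary k a
    obtain rb := Coalgebra.Repr.arbitrary k b
    rw [conv_repr G₂ F (Repr.tmul ra rb)]
    have step1 : ∑ p ∈ (Repr.tmul ra rb).index,
        G₂ ((Repr.tmul ra rb).left p) * F ((Repr.tmul ra rb).right p)
        = ∑ j ∈ rb.index, ∑ i ∈ ra.index,
            antipode (R := k) (rb.left j) *
              ((antipode (R := k) (ra.left i) * ra.right i) * rb.right j) := by
      simp only [Repr.tmul]
      rw [Finset.sum_product_right]
      refine Finset.sum_congr rfl fun j _ => Finset.sum_congr rfl fun i _ => ?_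
      simp only [hG₂, hF, LinearMap.comp_apply, LinearEquiv.coe_coe,
        TensorProduct.comm_tmul, TensorProduct.map_tmul, LinearMap.mul'_apply]
      rw [mul_assoc, mul_assoc]
    rw [step1]
    have step2 : ∀ j ∈ rb.index, ∑ i ∈ ra.index,
        antipode (R := k) (rb.left j) *
          ((antipode (R := k) (ra.left i) * ra.right i) * rb.right j)
        = Coalgebra.counit (R := k) a • (antipode (R := k) (rb.left j) * rb.right j) := by
      intro j _
      rw [← Finset.mul_sum, ← Finset.sum_mul, HopfAlgebra.sum_antipode_mul_eq_smul ra]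
      rw [smul_mul_assoc, one_mul, mul_smul_comm]
    rw [Finset.sum_congr rfl step2, ← Finset.smul_sum,
      HopfAlgebra.sum_antipode_mul_eq_smul rb, cunit_apply, counit_tmul]
    rw [smul_smul]
  have key : G₁ = G₂ := by
    calc G₁ = conv cunit G₁ := (conv_cunit_left _).symm
      _ = conv (conv G₂ F) G₁ := by rw [h2]
      _ = conv G₂ (conv F G₁) := conv_assoc _ _ _
      _ = conv G₂ cunit := by rw [h1]
      _ = G₂ := conv_cunit_right _
  have := congrArg (fun (L : (H ⊗[k] H) →ₗ[k] H) => L (a ⊗ₜ[k] b)) key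
  simpa [hF, hG₁, hG₂] using this

end Antipode


section Quot

variable {k : Type u} [CommRing k]
variable {H : Type u} [Ring H] [HopfAlgebra k H]
variable {X : Type u} [Ring X] [Bialgebra k X]
variable (f g : X →ₐc[k] H)

/-- The relation killing the image of `f - g`. -/
def qrel : H → H → Prop := fun x y => (∃ z : X, x = f z - g z) ∧ y = 0

/-- The quotient of `H` by the ideal generated by the image of `f - g`. -/
abbrev Qt : Type u := RingQuot (qrel f g)

/-- The quotient map, as an algebra hom. -/
noncomputable def qmap : H →ₐ[k] Qt f g := RingQuot.mkAlgHom k (qrel f g)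

lemma qmap_surjective : Function.Surjective (qmap (k := k) f g) :=
  RingQuot.mkAlgHom_surjective k _

lemma qmap_sub (z : X) : qmap f g (f z - g z) = 0 := by
  have h : qrel f g (f z - g z) 0 := ⟨⟨z, rfl⟩, rfl⟩
  have := RingQuot.mkAlgHom_rel k h
  simpa [qmap] using this

lemma qmap_fg (z : X) : qmap f g (f z) = qmap f g (g z) := by
  have := qmap_sub f g z
  rw [map_sub, sub_eq_zero] at this
  exact this

/-- The ideal generated by the image of `f - g`, as a submodule. -/
def II : Submodule k H :=
  Submodule.span k {x : H | ∃ (a b : H) (z : X), x = a * (f z - g z) * b}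

lemma qmap_II {x : H} (hx : x ∈ II f g) : qmap f g x = 0 := by
  induction hx using Submodule.span_induction with
  | mem x hx =>
      obtain ⟨a, b, z, rfl⟩ := hx
      rw [map_mul, map_mul, qmap_sub, mul_zero, zero_mul]
  | zero => exact map_zero _
  | add x y _ _ hx hy => rw [map_add, hx, hy, add_zero]
  | smul c x _ hx => rw [map_smul, hx, smul_zero]

end Quot

section Instances

variable {k : Type u} [CommRing k]
variable {H : Type u} [Ring H] [HopfAlgebra k H]
variable {X : Type u} [Ring X] [Bialgebra k X]
variable (f g : X →ₐc[k] H)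

lemma comul_sub_apply (z : X) :
    Coalgebra.comul (R := k) (f z - g z) =
      TensorProduct.map (f : X →ₗ[k] H) (f : X →ₗ[k] H) (Coalgebra.comul (R := k) z) -
      TensorProduct.map (g : X →ₗ[k] H) (g : X →ₗ[k] H) (Coalgebra.comul (R := k) z) := by
  rw [map_sub]
  congr 1
  · exact (LinearMap.congr_fun (CoalgHomClass.map_comp_comul (f : X →ₗc[k] H)) z).symm
  · exact (LinearMap.congr_fun (CoalgHomClass.map_comp_comul (g : X →ₗc[k] H)) z).symm

lemma counit_comp_apply' (φ : X →ₐc[k] H) (z : X) :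
    Coalgebra.counit (R := k) (φ z) = Coalgebra.counit (R := k) z :=
  LinearMap.congr_fun (CoalgHomClass.counit_comp (φ : X →ₗc[k] H)) z

lemma mapqq_comul_sub (z : X) :
    (Algebra.TensorProduct.map (qmap f g) (qmap f g)).toLinearMap
      (Coalgebra.comul (R := k) (f z - g z)) = 0 := by
  rw [comul_sub_apply, map_sub]
  obtain r := Coalgebra.Repr.arbitrary k z
  rw [← r.eq]
  simp only [map_sum, TensorProduct.map_tmul, AlgHom.toLinearMap_apply,
    Algebra.TensorProduct.map_tmul]
  rw [sub_eq_zero]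
  refine Finset.sum_congr rfl fun i _ => ?_
  have h1 : ∀ w : X, ((f : X →ₗ[k] H) w) = f w := fun _ => rfl
  have h2 : ∀ w : X, ((g : X →ₗ[k] H) w) = g w := fun _ => rfl
  rw [h1, h1, h2, h2, qmap_fg f g, qmap_fg f g]

/-- Comultiplication on the quotient, as an algebra hom. -/
noncomputable def comulQA : Qt f g →ₐ[k] (Qt f g ⊗[k] Qt f g) :=
  RingQuot.liftAlgHom k ⟨(Algebra.TensorProduct.map (qmap f g) (qmap f g)).comp
    (Bialgebra.comulAlgHom k H), by
      rintro x y ⟨⟨z, rfl⟩, rfl⟩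
      simp only [AlgHom.comp_apply, Bialgebra.comulAlgHom_apply, map_zero]
      have := mapqq_comul_sub f g z
      rw [AlgHom.toLinearMap_apply] at this
      simpa using this⟩

/-- Counit on the quotient, as an algebra hom. -/
noncomputable def counitQA : Qt f g →ₐ[k] k :=
  RingQuot.liftAlgHom k ⟨Bialgebra.counitAlgHom k H, by
    rintro x y ⟨⟨z, rfl⟩, rfl⟩
    simp only [Bialgebra.counitAlgHom_apply, map_zero, map_sub]
    rw [counit_comp_apply' f z, counit_comp_apply' g z, sub_self]⟩

lemma comulQA_mk (x : H) :
    comulQA f g (qmap f g x) =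
      (Algebra.TensorProduct.map (qmap f g) (qmap f g)) (Coalgebra.comul (R := k) x) :=
  RingQuot.liftAlgHom_mkAlgHom_apply _ _ _ _

lemma counitQA_mk (x : H) :
    counitQA f g (qmap f g x) = Coalgebra.counit (R := k) x :=
  RingQuot.liftAlgHom_mkAlgHom_apply _ _ _ _

set_option maxHeartbeats 1000000 in
set_option synthInstance.maxHeartbeats 400000 in
/-- Coalgebra structure on the quotient. -/
noncomputable instance instCoalgebraQt : Coalgebra k (Qt f g) where
  comul := (comulQA f g).toLinearMap
  counit := (counitQA f g).toLinearMap
  coassoc := by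
    apply LinearMap.ext; intro q
    obtain ⟨x, rfl⟩ := qmap_surjective f g q
    obtain r := Coalgebra.Repr.arbitrary k x
    set r₁ : (i : r.ι) → Coalgebra.Repr k (r.left i) (H × H) :=
      fun i => Coalgebra.Repr.arbitrary k _ with hr₁
    set r₂ : (i : r.ι) → Coalgebra.Repr k (r.right i) (H × H) :=
      fun i => Coalgebra.Repr.arbitrary k _ with hr₂
    have hcomul : ∀ (y : H) {ι : Type u} (ry : Coalgebra.Repr k y ι),
        (comulQA f g).toLinearMap (qmap f g y) =
          ∑ i ∈ ry.index, qmap f g (ry.left i) ⊗ₜ[k] qmap f g (ry.right i) := by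
      intro y _ ry
      rw [AlgHom.toLinearMap_apply, comulQA_mk, ← ry.eq, map_sum]
      simp [Algebra.TensorProduct.map_tmul]
    simp only [LinearMap.comp_apply, LinearEquiv.coe_coe]
    rw [hcomul x r]
    rw [map_sum (LinearMap.rTensor (Qt f g) (comulQA f g).toLinearMap) _ r.index,
      map_sum (LinearMap.lTensor (Qt f g) (comulQA f g).toLinearMap) _ r.index]
    simp only [LinearMap.rTensor_tmul, LinearMap.lTensor_tmul]
    rw [Finset.sum_congr rfl
        (fun i _ => congrArg (· ⊗ₜ[k] qmap f g (r.right i)) (hcomul (r.left i) (r₁ i)))]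
    rw [Finset.sum_congr rfl
        (fun i _ => congrArg (qmap f g (r.left i) ⊗ₜ[k] ·) (hcomul (r.right i) (r₂ i)))]
    rw [map_sum (TensorProduct.assoc k (Qt f g) (Qt f g) (Qt f g)) _ r.index]
    have hassoc : ∀ i ∈ r.index,
        (TensorProduct.assoc k (Qt f g) (Qt f g) (Qt f g))
          ((∑ j ∈ (r₁ i).index,
            qmap f g ((r₁ i).left j) ⊗ₜ[k] qmap f g ((r₁ i).right j)) ⊗ₜ[k]
              qmap f g (r.right i))
        = ∑ j ∈ (r₁ i).index, qmap f g ((r₁ i).left j) ⊗ₜ[k]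
            (qmap f g ((r₁ i).right j) ⊗ₜ[k] qmap f g (r.right i)) := by
      intro i _
      rw [TensorProduct.sum_tmul,
        map_sum (TensorProduct.assoc k (Qt f g) (Qt f g) (Qt f g)) _ (r₁ i).index]
      exact Finset.sum_congr rfl fun j _ => TensorProduct.assoc_tmul _ _ _
    rw [Finset.sum_congr rfl hassoc]
    simp only [TensorProduct.tmul_sum]
    exact (Coalgebra.sum_map_tmul_tmul_eq (qmap f g) (qmap f g) (qmap f g) x
      (repr := r) (a₁ := r₁) (a₂ := r₂)).symm
  rTensor_counit_comp_comul := by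
    apply LinearMap.ext; intro q
    obtain ⟨x, rfl⟩ := qmap_surjective f g q
    obtain r := Coalgebra.Repr.arbitrary k x
    simp only [LinearMap.comp_apply]
    rw [AlgHom.toLinearMap_apply, comulQA_mk, ← r.eq, map_sum, map_sum]
    simp only [Algebra.TensorProduct.map_tmul, LinearMap.rTensor_tmul,
      AlgHom.toLinearMap_apply, counitQA_mk]
    exact Coalgebra.sum_counit_tmul_map_eq (qmap f g) x (repr := r)
  lTensor_counit_comp_comul := by
    apply LinearMap.ext; intro q
    obtain ⟨x, rfl⟩ := qmap_surjective f g q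
    obtain r := Coalgebra.Repr.arbitrary k x
    simp only [LinearMap.comp_apply]
    rw [AlgHom.toLinearMap_apply, comulQA_mk, ← r.eq, map_sum, map_sum]
    simp only [Algebra.TensorProduct.map_tmul, LinearMap.lTensor_tmul,
      AlgHom.toLinearMap_apply, counitQA_mk]
    exact Coalgebra.sum_map_tmul_counit_eq (qmap f g) x (repr := r)

lemma comulQ_def :
    Coalgebra.comul (R := k) (A := Qt f g) = (comulQA f g).toLinearMap := rfl

lemma counitQ_def :
    Coalgebra.counit (R := k) (A := Qt f g) = (counitQA f g).toLinearMap := rfl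

lemma comulQ_repr (x : H) {ι : Type*} (rx : Coalgebra.Repr k x ι) :
    Coalgebra.comul (R := k) (qmap f g x) =
      ∑ i ∈ rx.index, qmap f g (rx.left i) ⊗ₜ[k] qmap f g (rx.right i) := by
  rw [comulQ_def, AlgHom.toLinearMap_apply, comulQA_mk, ← rx.eq, map_sum]
  simp [Algebra.TensorProduct.map_tmul]

lemma counitQ_mk (x : H) :
    Coalgebra.counit (R := k) (qmap f g x) = Coalgebra.counit (R := k) x := by
  rw [counitQ_def, AlgHom.toLinearMap_apply, counitQA_mk]

set_option maxHeartbeats 1000000 in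
set_option synthInstance.maxHeartbeats 400000 in
/-- Bialgebra structure on the quotient. -/
noncomputable instance instBialgebraQt : Bialgebra k (Qt f g) := by
  refine Bialgebra.mk' k (Qt f g) ?_ (fun {a b} => ?_) ?_ (fun {a b} => ?_)
  · rw [← map_one (qmap f g), counitQ_mk, Bialgebra.counit_one]
  · obtain ⟨x, rfl⟩ := qmap_surjective f g a
    obtain ⟨y, rfl⟩ := qmap_surjective f g b
    rw [← map_mul, counitQ_mk, counitQ_mk, counitQ_mk, Bialgebra.counit_mul]
  · rw [comulQ_def, ← map_one (qmap f g), AlgHom.toLinearMap_apply, comulQA_mk,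
      Bialgebra.comul_one, map_one]
  · obtain ⟨x, rfl⟩ := qmap_surjective f g a
    obtain ⟨y, rfl⟩ := qmap_surjective f g b
    rw [comulQ_def, ← map_mul, AlgHom.toLinearMap_apply, comulQA_mk, Bialgebra.comul_mul,
      map_mul]
    simp only [AlgHom.toLinearMap_apply, comulQA_mk]

/-- The hypothesis that the antipode maps generators into the ideal;
proved later via the convolution identity. -/
def AntipodeSubMem : Prop := ∀ z : X, antipode (R := k) (f z - g z) ∈ II f g

variable (hS : AntipodeSubMem f g)

/-- The antipode on the quotient, as a ring hom to the opposite ring. -/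
noncomputable def TQ : Qt f g →+* (Qt f g)ᵐᵒᵖ :=
  RingQuot.lift ⟨{
      toFun := fun x => MulOpposite.op (qmap f g (antipode (R := k) x))
      map_one' := by
        show MulOpposite.op (qmap f g (antipode (R := k) (1 : H))) = 1
        rw [antipode_one', map_one, MulOpposite.op_one]
      map_mul' := fun a b => by
        show MulOpposite.op (qmap f g (antipode (R := k) (a * b))) = _
        rw [antipode_mul', map_mul, MulOpposite.op_mul]
      map_zero' := by
        show MulOpposite.op (qmap f g (antipode (R := k) (0 : H))) = 0
        rw [map_zero, map_zero, MulOpposite.op_zero]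
      map_add' := fun a b => by
        show MulOpposite.op (qmap f g (antipode (R := k) (a + b))) = _
        rw [map_add, map_add, MulOpposite.op_add] },
    by
      rintro x y ⟨⟨z, rfl⟩, rfl⟩
      simp only [RingHom.coe_mk, MonoidHom.coe_mk, OneHom.coe_mk]
      rw [qmap_II f g (hS z), map_zero, map_zero, MulOpposite.op_zero]⟩

lemma qmap_eq_mkRingHom (x : H) :
    qmap f g x = RingQuot.mkRingHom (qrel f g) x := by
  rw [← RingQuot.mkAlgHom_coe k (qrel f g)]
  rfl

lemma TQ_mk (x : H) :
    TQ f g hS (qmap f g x) = MulOpposite.op (qmap f g (antipode (R := k) x)) := by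
  rw [qmap_eq_mkRingHom, TQ, RingQuot.lift_mkRingHom_apply]
  rfl

/-- The antipode on the quotient, as a linear map. -/
noncomputable def antipodeQL : Qt f g →ₗ[k] Qt f g where
  toFun := fun q => (TQ f g hS q).unop
  map_add' := fun a b => by
    show (TQ f g hS (a + b)).unop = (TQ f g hS a).unop + (TQ f g hS b).unop
    rw [map_add, MulOpposite.unop_add]
  map_smul' := fun c q => by
    obtain ⟨x, rfl⟩ := qmap_surjective f g q
    show (TQ f g hS (c • qmap f g x)).unop = (RingHom.id k) c • (TQ f g hS (qmap f g x)).unop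
    rw [← map_smul (qmap f g) c x, TQ_mk, TQ_mk]
    simp only [MulOpposite.unop_op, RingHom.id_apply]
    rw [map_smul, map_smul]

lemma antipodeQL_mk (x : H) :
    antipodeQL f g hS (qmap f g x) = qmap f g (antipode (R := k) x) := by
  show (TQ f g hS (qmap f g x)).unop = _
  rw [TQ_mk]
  rfl

set_option maxHeartbeats 1000000 in
set_option synthInstance.maxHeartbeats 400000 in
/-- Hopf algebra structure on the quotient. -/
noncomputable def hopfQt : HopfAlgebra k (Qt f g) where
  antipode := antipodeQL f g hS
  mul_antipode_rTensor_comul := by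
    apply LinearMap.ext; intro q
    obtain ⟨x, rfl⟩ := qmap_surjective f g q
    obtain r := Coalgebra.Repr.arbitrary k x
    simp only [LinearMap.comp_apply]
    rw [comulQ_repr f g x r, map_sum, map_sum]
    simp only [LinearMap.rTensor_tmul, antipodeQL_mk, LinearMap.mul'_apply]
    have : ∀ i ∈ r.index,
        qmap f g (antipode (R := k) (r.left i)) * qmap f g (r.right i)
        = qmap f g (antipode (R := k) (r.left i) * r.right i) := fun i _ => (map_mul _ _ _).symm
    rw [Finset.sum_congr rfl this, ← map_sum, HopfAlgebra.sum_antipode_mul_eq_smul r]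
    rw [map_smul, map_one, counitQ_mk]
    rw [Algebra.linearMap_apply, Algebra.algebraMap_eq_smul_one]
  mul_antipode_lTensor_comul := by
    apply LinearMap.ext; intro q
    obtain ⟨x, rfl⟩ := qmap_surjective f g q
    obtain r := Coalgebra.Repr.arbitrary k x
    simp only [LinearMap.comp_apply]
    rw [comulQ_repr f g x r, map_sum, map_sum]
    simp only [LinearMap.lTensor_tmul, antipodeQL_mk, LinearMap.mul'_apply]
    have : ∀ i ∈ r.index,
        qmap f g (r.left i) * qmap f g (antipode (R := k) (r.right i))
        = qmap f g (r.left i * antipode (R := k) (r.right i)) := fun i _ => (map_mul _ _ _).symm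
    rw [Finset.sum_congr rfl this, ← map_sum, HopfAlgebra.sum_mul_antipode_eq_smul r]
    rw [map_smul, map_one, counitQ_mk]
    rw [Algebra.linearMap_apply, Algebra.algebraMap_eq_smul_one]

end Instances


section ConvBialg

variable {k : Type u} [CommRing k]
variable {H : Type u} [Ring H] [HopfAlgebra k H]
variable {X : Type u} [Ring X] [Bialgebra k X]

/-- Push a representation forward along a coalgebra hom. -/
noncomputable def pushRepr (f : X →ₐc[k] H) {z : X} {ι : Type*} (rz : Coalgebra.Repr k z ι) :
    Coalgebra.Repr k (f z) ι where
  index := rz.index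
  left := fun i => f (rz.left i)
  right := fun i => f (rz.right i)
  eq := by
    have h2 := LinearMap.congr_fun (CoalgHomClass.map_comp_comul (f : X →ₗc[k] H)) z
    rw [LinearMap.comp_apply, LinearMap.comp_apply] at h2
    rw [show Coalgebra.comul (R := k) (f z) = _ from h2.symm, ← rz.eq, map_sum]
    rfl

lemma conv_antipode_f_f (f : X →ₐc[k] H) :
    conv (antipode (R := k) ∘ₗ (f : X →ₗ[k] H)) (f : X →ₗ[k] H) = cunit := by
  ext z
  obtain rz := Coalgebra.Repr.arbitrary k z
  rw [conv_repr _ _ rz]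
  have : ∑ i ∈ rz.index,
      (antipode (R := k) ∘ₗ (f : X →ₗ[k] H)) (rz.left i) * (f : X →ₗ[k] H) (rz.right i)
      = ∑ i ∈ (pushRepr f rz).index,
          antipode (R := k) ((pushRepr f rz).left i) * (pushRepr f rz).right i := by
    refine Finset.sum_congr rfl fun i _ => ?_
    rfl
  rw [this, HopfAlgebra.sum_antipode_mul_eq_smul (pushRepr f rz), cunit_apply,
    counit_comp_apply' f z]

lemma conv_f_antipode_f (f : X →ₐc[k] H) :
    conv (f : X →ₗ[k] H) (antipode (R := k) ∘ₗ (f : X →ₗ[k] H)) = cunit := by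
  ext z
  obtain rz := Coalgebra.Repr.arbitrary k z
  rw [conv_repr _ _ rz]
  have : ∑ i ∈ rz.index,
      (f : X →ₗ[k] H) (rz.left i) * (antipode (R := k) ∘ₗ (f : X →ₗ[k] H)) (rz.right i)
      = ∑ i ∈ (pushRepr f rz).index,
          (pushRepr f rz).left i * antipode (R := k) ((pushRepr f rz).right i) := by
    refine Finset.sum_congr rfl fun i _ => ?_
    rfl
  rw [this, HopfAlgebra.sum_mul_antipode_eq_smul (pushRepr f rz), cunit_apply,
    counit_comp_apply' f z]

lemma antipode_comp_sub (f g : X →ₐc[k] H) :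
    antipode (R := k) ∘ₗ ((f : X →ₗ[k] H) - (g : X →ₗ[k] H)) =
      conv (conv (antipode (R := k) ∘ₗ (f : X →ₗ[k] H))
        ((g : X →ₗ[k] H) - (f : X →ₗ[k] H))) (antipode (R := k) ∘ₗ (g : X →ₗ[k] H)) := by
  set fL : X →ₗ[k] H := (f : X →ₗ[k] H)
  set gL : X →ₗ[k] H := (g : X →ₗ[k] H)
  set Sf : X →ₗ[k] H := antipode (R := k) ∘ₗ fL
  set Sg : X →ₗ[k] H := antipode (R := k) ∘ₗ gL
  have h1 : conv Sf fL = cunit := conv_antipode_f_f f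
  have h3 : conv gL Sg = cunit := conv_f_antipode_f g
  have key : conv (conv Sf (gL - fL)) Sg = Sf - Sg := by
    rw [conv_sub_right, conv_sub_left, h1, conv_assoc, h3, conv_cunit_right,
      conv_cunit_left]
  rw [key]
  ext z
  simp [Sf, Sg, map_sub]

lemma antipodeSubMem (f g : X →ₐc[k] H) : AntipodeSubMem f g := by
  intro z
  have h := LinearMap.congr_fun (antipode_comp_sub f g) z
  rw [LinearMap.comp_apply, LinearMap.sub_apply] at h
  have hL : antipode (R := k) (f z - g z)
      = conv (conv (antipode (R := k) ∘ₗ (f : X →ₗ[k] H))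
          ((g : X →ₗ[k] H) - (f : X →ₗ[k] H))) (antipode (R := k) ∘ₗ (g : X →ₗ[k] H)) z := h
  rw [hL]
  obtain rz := Coalgebra.Repr.arbitrary k z
  rw [conv_repr _ _ rz]
  refine Submodule.sum_mem _ fun i _ => ?_
  obtain ri := Coalgebra.Repr.arbitrary k (rz.left i)
  rw [conv_repr _ _ ri, Finset.sum_mul]
  refine Submodule.sum_mem _ fun j _ => ?_
  have hd : ((g : X →ₗ[k] H) - (f : X →ₗ[k] H)) (ri.right j)
      = -(f (ri.right j) - g (ri.right j)) := by
    rw [LinearMap.sub_apply, neg_sub]; rfl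
  rw [hd, mul_neg, neg_mul]
  refine Submodule.neg_mem _ (Submodule.subset_span ?_)
  exact ⟨(antipode (R := k) ∘ₗ (f : X →ₗ[k] H)) (ri.left j),
    (antipode (R := k) ∘ₗ (g : X →ₗ[k] H)) (rz.right i), ri.right j, rfl⟩

lemma mapAlg_toLinearMap (f g : X →ₐc[k] H) :
    (Algebra.TensorProduct.map (qmap f g) (qmap f g)).toLinearMap
      = TensorProduct.map (qmap f g).toLinearMap (qmap f g).toLinearMap :=
  TensorProduct.ext' fun _ _ => rfl

lemma counit_comp_apply₂ {A B₂ : Type u} [Ring A] [Bialgebra k A] [Ring B₂] [Bialgebra k B₂]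
    (φ : A →ₐc[k] B₂) (z : A) :
    Coalgebra.counit (R := k) (φ z) = Coalgebra.counit (R := k) z :=
  LinearMap.congr_fun (CoalgHomClass.counit_comp (φ : A →ₗc[k] B₂)) z

lemma comul_apply₂ {A B₂ : Type u} [Ring A] [Bialgebra k A] [Ring B₂] [Bialgebra k B₂]
    (φ : A →ₐc[k] B₂) (z : A) :
    Coalgebra.comul (R := k) (φ z) =
      TensorProduct.map (φ : A →ₗ[k] B₂) (φ : A →ₗ[k] B₂) (Coalgebra.comul (R := k) z) :=
  (LinearMap.congr_fun (CoalgHomClass.map_comp_comul (φ : A →ₗc[k] B₂)) z).symm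

end ConvBialg

end CounitMonoAux

open CategoryTheory

/-- for any right adjoint `G` of the forgetful functor
`U : HopfAlg_k ⥤ BiAlg_k`, the counit component `β_B : U(G(B)) → B` is a monomorphism in the
category of bialgebras over `k`, for every bialgebra `B`. -/
theorem counit_cofree_hopf_mono (k : Type u) [Field k]
    (G : BialgCat.{u} k ⥤ HopfAlgCat.{u} k)
    (adj : forget₂ (HopfAlgCat.{u} k) (BialgCat.{u} k) ⊣ G)
    (B : BialgCat.{u} k) :
    Mono (adj.counit.app B) := by
  constructor
  intro Z fm gm hfg
  -- underlying bialgebra homs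
  let fb : ↥Z →ₐc[k] ↥(G.obj B) := fm.toBialgHom
  let gb : ↥Z →ₐc[k] ↥(G.obj B) := gm.toBialgHom
  let ε : ↥(G.obj B) →ₐc[k] ↥B := (adj.counit.app B).toBialgHom
  have hεfg : ∀ z : ↥Z, ε (fb z) = ε (gb z) := by
    intro z
    have h1 := congrArg BialgCat.Hom.toBialgHom hfg
    rw [BialgCat.toBialgHom_comp, BialgCat.toBialgHom_comp] at h1
    have h2 := DFunLike.congr_fun h1 z
    exact h2
  -- the quotient Hopf algebra
  have hS : CounitMonoAux.AntipodeSubMem fb gb := CounitMonoAux.antipodeSubMem fb gb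
  letI : HopfAlgebra k (CounitMonoAux.Qt fb gb) := CounitMonoAux.hopfQt fb gb hS
  let Qobj : HopfAlgCat.{u} k := HopfAlgCat.of k (CounitMonoAux.Qt fb gb)
  -- the quotient map as a Hopf-category morphism
  let qBialg : ↥(G.obj B) →ₐc[k] CounitMonoAux.Qt fb gb :=
    { toCoalgHom :=
        { toLinearMap := (CounitMonoAux.qmap fb gb).toLinearMap
          counit_comp := LinearMap.ext fun x => CounitMonoAux.counitQ_mk fb gb x
          map_comp_comul := by
            apply LinearMap.ext
            intro x
            simp only [LinearMap.comp_apply]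
            rw [← CounitMonoAux.mapAlg_toLinearMap fb gb]
            rw [AlgHom.toLinearMap_apply, AlgHom.toLinearMap_apply]
            rw [CounitMonoAux.comulQ_def fb gb, AlgHom.toLinearMap_apply,
              CounitMonoAux.comulQA_mk fb gb x] }
      map_one' := map_one (CounitMonoAux.qmap fb gb)
      map_mul' := map_mul (CounitMonoAux.qmap fb gb) }
  let qHom : G.obj B ⟶ Qobj := ⟨qBialg⟩
  -- the induced map from the quotient to B
  let εQA : CounitMonoAux.Qt fb gb →ₐ[k] ↥B :=
    RingQuot.liftAlgHom k ⟨(ε : ↥(G.obj B) →ₐ[k] ↥B), by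
      rintro x y ⟨⟨z, rfl⟩, rfl⟩
      show ε (fb z - gb z) = ε 0
      rw [map_sub, hεfg z, sub_self, map_zero]⟩
  have εQA_mk : ∀ x : ↥(G.obj B), εQA (CounitMonoAux.qmap fb gb x) = ε x := fun x =>
    RingQuot.liftAlgHom_mkAlgHom_apply _ _ _ _
  let εQbialg : CounitMonoAux.Qt fb gb →ₐc[k] ↥B :=
    { toCoalgHom :=
        { toLinearMap := εQA.toLinearMap
          counit_comp := by
            apply LinearMap.ext
            intro q
            obtain ⟨x, rfl⟩ := CounitMonoAux.qmap_surjective fb gb q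
            simp only [LinearMap.comp_apply, AlgHom.toLinearMap_apply]
            rw [εQA_mk x, CounitMonoAux.counit_comp_apply₂ ε x,
              CounitMonoAux.counitQ_mk fb gb x]
          map_comp_comul := by
            apply LinearMap.ext
            intro q
            obtain ⟨x, rfl⟩ := CounitMonoAux.qmap_surjective fb gb q
            obtain rx := Coalgebra.Repr.arbitrary k x
            simp only [LinearMap.comp_apply, AlgHom.toLinearMap_apply]
            rw [CounitMonoAux.comulQ_repr fb gb x rx, εQA_mk x,
              CounitMonoAux.comul_apply₂ ε x, ← rx.eq, map_sum, map_sum]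
            refine Finset.sum_congr rfl fun i _ => ?_
            simp only [TensorProduct.map_tmul, AlgHom.toLinearMap_apply, εQA_mk]
            rfl }
      map_one' := map_one εQA
      map_mul' := map_mul εQA }
  let εQmor : (forget₂ (HopfAlgCat.{u} k) (BialgCat.{u} k)).obj Qobj ⟶ B := ⟨εQbialg⟩
  let Ψ : Qobj ⟶ G.obj B := (adj.homEquiv Qobj B) εQmor
  have hUq : (forget₂ (HopfAlgCat.{u} k) (BialgCat.{u} k)).map qHom ≫ εQmor = adj.counit.app B := by
    apply BialgCat.hom_ext
    refine DFunLike.ext _ _ fun x => ?_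
    show εQbialg (qBialg x) = ε x
    exact εQA_mk x
  have hsplit : qHom ≫ Ψ = 𝟙 (G.obj B) := by
    have e1 : (adj.homEquiv Qobj B).symm Ψ = εQmor := Equiv.symm_apply_apply _ _
    rw [Adjunction.homEquiv_counit] at e1
    apply (adj.homEquiv (G.obj B) B).symm.injective
    rw [Adjunction.homEquiv_counit, Adjunction.homEquiv_counit,
      CategoryTheory.Functor.map_comp, CategoryTheory.Functor.map_id, Category.id_comp,
      Category.assoc, e1, hUq]
  have retract : ∀ x : ↥(G.obj B), Ψ.toBialgHom (CounitMonoAux.qmap fb gb x) = x := by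
    intro x
    have h2 := congrArg HopfAlgCat.Hom.toBialgHom hsplit
    rw [HopfAlgCat.toBialgHom_comp, HopfAlgCat.toBialgHom_id] at h2
    exact DFunLike.congr_fun h2 x
  have hzero : ∀ z : ↥Z, fb z = gb z := by
    intro z
    have h0 : CounitMonoAux.qmap fb gb (fb z - gb z) = 0 := CounitMonoAux.qmap_sub fb gb z
    have h3 := retract (fb z - gb z)
    rw [h0, map_zero] at h3
    exact sub_eq_zero.mp h3.symm
  apply BialgCat.hom_ext
  exact DFunLike.ext _ _ hzero
end
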